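/- arXiv:2109.07897 — 8 statements merged into one kernel-verified Lean document; each statement's English description precedes it below -/
import Mathlib

section
/- For every integer N ≥ 2, every configuration η ∈ Σ_N and every unoriented elementary face 𝔣 of the discrete torus Λ_N, one has ∑_{(x,y)∈f^↺} η(x)·[τ_𝔣 g(η) + τ_𝔣 g(η^{x,y})] = ∑_{(x,y)∈f^↻} η(x)·[τ_𝔣 g(η) + τ_𝔣 g(η^{x,y})], where f^↺ and f^↻ denote the anticlockwise and clockwise orientations of 𝔣 (each regarded as the cyclic sequence of four directed edges around the face). -/
/-!
Let `s` be the occupation of the four corners of the face, in anticlockwise order; then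
`τ_𝔣 g = α · [s is a checkerboard]`, and the terms `η(x) τ_𝔣 g(η)` give the same total on both
sides. If corner `i` is occupied and `j` is a neighbour of `i`, exchanging `i` and `j` yields a
checkerboard iff the occupied corners are exactly `i` and its other neighbour. So on either
orientation the remaining sum is `α` times the number of occupied adjacent pairs of corners
with the other two corners empty: each such pair is seen once, from the corner whose successor
(resp. predecessor) is empty.
-/

open Finset

/-- The two-dimensional discrete torus `Λ_N = ℤ²/Nℤ²`. -/
abbrev Torus (N : ℕ) := ZMod N × ZMod N

/-- Particle configurations `Σ_N = {0,1}^{Λ_N}`. -/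
abbrev Config (N : ℕ) := Torus N → Bool

/-- Occupation number as a real number. -/
noncomputable def bval (b : Bool) : ℝ := if b then 1 else 0

/-- The four unit directions `e¹, e², -e¹, -e²`. -/
def dvec (N : ℕ) : Fin 4 → Torus N := ![(1, 0), (0, 1), (-1, 0), (0, -1)]

/-- Reversal of a direction. -/
def rev : Fin 4 → Fin 4 := ![2, 3, 0, 1]

/-- The two coordinate unit vectors `e¹, e²`. -/
def ee (N : ℕ) : Fin 2 → Torus N := ![(1, 0), (0, 1)]

/-- `η^{x,y}` : exchange the occupation values at `x` and `y`. -/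
def swap {N : ℕ} (η : Config N) (x y : Torus N) : Config N :=
  fun z => if z = x then η y else if z = y then η x else η z

/-- Translation of configurations, `(τ_z η)(w) = η(w - z)`. -/
def trc {N : ℕ} (z : Torus N) (η : Config N) : Config N := fun w => η (w - z)

/-- Translation of functions, `(τ_z h)(η) = h(τ_{-z} η)`. -/
def trf {N : ℕ} (z : Torus N) (h : Config N → ℝ) : Config N → ℝ := fun η => h (trc (-z) η)

/-- The local function `g` on the face with lower-left corner `0`. -/
noncomputable def gfun {N : ℕ} (α : ℝ) (η : Config N) : ℝ :=
  if η (0, 0) = true ∧ η (1, 1) = true ∧ η (1, 0) = false ∧ η (0, 1) = false then α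
  else if η (1, 0) = true ∧ η (0, 1) = true ∧ η (0, 0) = false ∧ η (1, 1) = false then α
  else 0

/-- Lower-left corner of the anticlockwise face `f⁺(x, x + dvec d)` traversing the edge
according to its orientation. -/
def fplus {N : ℕ} (x : Torus N) (d : Fin 4) : Torus N :=
  ![x, x - (1, 0), x - (1, 0) - (0, 1), x - (0, 1)] d

/-- Lower-left corner of the anticlockwise face `f⁻(x, x + dvec d)` traversing the reversed
edge according to its orientation. -/
def fminus {N : ℕ} (x : Torus N) (d : Fin 4) : Torus N :=
  ![x - (0, 1), x, x - (1, 0), x - (1, 0) - (0, 1)] d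

/-- The jump rate `c_{x, x + dvec d}(η)`. -/
noncomputable def rate {N : ℕ} (α : ℝ) (η : Config N) (x : Torus N) (d : Fin 4) : ℝ :=
  bval (η x) * (1 - bval (η (x + dvec N d)))
    + bval (η x) * (trf (fplus x d) (gfun α) η - trf (fminus x d) (gfun α) η)

/-- The Bernoulli product measure `ν_ρ`. -/
noncomputable def nu {N : ℕ} [NeZero N] (ρ : ℝ) (η : Config N) : ℝ :=
  ∏ x : Torus N, if η x then ρ else 1 - ρ

/-- The generator `L_N`. -/
noncomputable def gen {N : ℕ} [NeZero N] (α : ℝ) (F : Config N → ℝ) (η : Config N) : ℝ :=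
  ∑ x : Torus N, ∑ d : Fin 4, rate α η x d * (F (swap η x (x + dvec N d)) - F η)

/-- Sum of an edge function over the four directed edges of the anticlockwise oriented face
with lower-left corner `w`. -/
noncomputable def faceCCW {N : ℕ} (F : Torus N → Fin 4 → ℝ) (w : Torus N) : ℝ :=
  F w 0 + F (w + (1, 0)) 1 + F (w + (1, 0) + (0, 1)) 2 + F (w + (0, 1)) 3

/-- Sum of an edge function over the four directed edges of the clockwise oriented face
with lower-left corner `w`. -/
noncomputable def faceCW {N : ℕ} (F : Torus N → Fin 4 → ℝ) (w : Torus N) : ℝ :=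
  F w 1 + F (w + (0, 1)) 0 + F (w + (1, 0) + (0, 1)) 3 + F (w + (1, 0)) 2

variable {N : ℕ}

def corner (w : Torus N) : Fin 4 → Torus N :=
  ![w, w + (1, 0), w + (1, 0) + (0, 1), w + (0, 1)]

theorem faceCCW_eq_sum (F : Torus N → Fin 4 → ℝ) (w : Torus N) :
    faceCCW F w = ∑ i, F (corner w i) i := by
  simp [faceCCW, corner, Fin.sum_univ_four]

theorem faceCW_eq_sum (F : Torus N → Fin 4 → ℝ) (w : Torus N) :
    faceCW F w = ∑ i, F (corner w i) (i + 1) := by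
  simp [faceCW, corner, Fin.sum_univ_four]
  ring

theorem corner_add_dvec (w : Torus N) (i : Fin 4) :
    corner w i + dvec N i = corner w (i + 1) := by
  fin_cases i <;> ext <;> simp [corner, dvec]

theorem corner_add_dvec_add_one (w : Torus N) (i : Fin 4) :
    corner w i + dvec N (i + 1) = corner w (i - 1) := by
  fin_cases i <;> ext <;> simp [corner, dvec]

theorem corner_injective (hN : 2 ≤ N) (w : Torus N) : Function.Injective (corner w) := by
  have : Fact (1 < N) := ⟨hN⟩
  have h1 : (1 : ZMod N) ≠ 0 := one_ne_zero
  intro i j h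
  fin_cases i <;> fin_cases j <;> simp_all [corner, Prod.ext_iff]

theorem swap_comp_of_injective {ι : Type*} [DecidableEq ι] {c : ι → Torus N}
    (hc : Function.Injective c) (η : Config N) (i j : ι) :
    swap η (c i) (c j) ∘ c = (η ∘ c) ∘ Equiv.swap i j := by
  funext k
  simp only [Function.comp_apply, swap, hc.eq_iff, Equiv.swap_apply_def]
  split_ifs <;> simp_all

def IsCheckerboard (s : Fin 4 → Bool) : Prop := s 0 = s 2 ∧ s 1 = s 3 ∧ s 0 ≠ s 1

instance : DecidablePred IsCheckerboard := fun s => by unfold IsCheckerboard; infer_instance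

theorem trf_gfun (α : ℝ) (w : Torus N) (ζ : Config N) :
    trf w (gfun α) ζ = if IsCheckerboard (ζ ∘ corner w) then α else 0 := by
  have e : (1, 1) + w = w + (1, 0) + (0, 1) := by ext <;> simp [add_comm]
  simp only [trf, trc, gfun, IsCheckerboard, sub_neg_eq_add, Prod.mk_zero_zero, e,
    add_comm _ w, Function.comp_apply, corner, Matrix.cons_val_zero, Matrix.cons_val,
    Matrix.cons_val_one, ne_eq]
  rcases Bool.eq_false_or_eq_true (ζ w) with ha | ha <;>
  rcases Bool.eq_false_or_eq_true (ζ (w + (1, 0))) with hb | hb <;>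
  rcases Bool.eq_false_or_eq_true (ζ (w + (1, 0) + (0, 1))) with hc | hc <;>
  rcases Bool.eq_false_or_eq_true (ζ (w + (0, 1))) with hd | hd <;>
  simp [ha, hb, hc, hd]

theorem occupied_and_isCheckerboard_swap (s : Fin 4 → Bool) (i δ : Fin 4)
    (hδ : δ = 1 ∨ δ = -1) :
    (s i ∧ IsCheckerboard (s ∘ Equiv.swap i (i + δ))) ↔
      (s i ∧ s (i - δ) ∧ s (i + δ) = false ∧ s (i + 2) = false) := by
  revert s i δ
  decide

theorem bval_mul_ite_isCheckerboard_swap (α : ℝ) (s : Fin 4 → Bool) (i δ : Fin 4)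
    (hδ : δ = 1 ∨ δ = -1) :
    bval (s i) * (if IsCheckerboard (s ∘ Equiv.swap i (i + δ)) then α else 0) =
      if s i ∧ s (i - δ) ∧ s (i + δ) = false ∧ s (i + 2) = false then α else 0 := by
  simp only [← occupied_and_isCheckerboard_swap s i δ hδ, bval]
  cases s i <;> simp

theorem sum_swap_succ_eq_sum_swap_pred (α : ℝ) (s : Fin 4 → Bool) :
    ∑ i, bval (s i) * ((if IsCheckerboard s then α else 0) +
        if IsCheckerboard (s ∘ Equiv.swap i (i + 1)) then α else 0) =
      ∑ i, bval (s i) * ((if IsCheckerboard s then α else 0) +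
        if IsCheckerboard (s ∘ Equiv.swap i (i - 1)) then α else 0) := by
  simp only [mul_add, sum_add_distrib, sub_eq_add_neg,
    bval_mul_ite_isCheckerboard_swap α s _ _ (.inl rfl),
    bval_mul_ite_isCheckerboard_swap α s _ _ (.inr rfl)]
  congr 1
  -- an occupied pair `{i, i + 1}` is seen from `i + 1` on the left and from `i` on the right
  rw [← Equiv.sum_comp (Equiv.addRight (1 : Fin 4))]
  refine sum_congr rfl fun i _ => if_congr ?_ rfl rfl
  fin_cases i <;> simp [show (-1 : Fin 4) = 3 from rfl] <;> tauto

theorem stmt_0_general (N : ℕ) (hN : 2 ≤ N) (α : ℝ)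
    (η : Config N) (w : Torus N) :
    faceCCW (fun x d =>
        bval (η x) * (trf w (gfun α) η + trf w (gfun α) (swap η x (x + dvec N d)))) w
      = faceCW (fun x d =>
        bval (η x) * (trf w (gfun α) η + trf w (gfun α) (swap η x (x + dvec N d)))) w := by
  rw [faceCCW_eq_sum, faceCW_eq_sum]
  simp only [corner_add_dvec, corner_add_dvec_add_one, trf_gfun,
    swap_comp_of_injective (corner_injective hN w)]
  exact sum_swap_succ_eq_sum_swap_pred α (η ∘ corner w)

/-- the contributions of the anticlockwise and clockwise orientations of any
unoriented face coincide. -/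
theorem stmt_0 (N : ℕ) [NeZero N] (hN : 2 ≤ N) (α : ℝ) (hα : |α| < 1)
    (η : Config N) (w : Torus N) :
    faceCCW (fun x d =>
        bval (η x) * (trf w (gfun α) η + trf w (gfun α) (swap η x (x + dvec N d)))) w
      = faceCW (fun x d =>
        bval (η x) * (trf w (gfun α) η + trf w (gfun α) (swap η x (x + dvec N d)))) w :=
  stmt_0_general N hN α η w
end

section
/- For every integer N ≥ 2 and every configuration η ∈ Σ_N, the jump rates of the model satisfy ∑_{(x,y)∈E_N} c_{x,y}(η) = ∑_{(x,y)∈E_N} c_{y,x}(η^{x,y}), where the sums run over all directed edges of the discrete torus. (This identity expresses the stationarity of the uniform canonical measures.) -/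
open Finset

/-!
The symmetric part `η(x)(1 - η(y))` of the rate is invariant under `(x, y, η) ↦ (y, x, η^{x,y})`,
and `f^±(y, x) = f^∓(x, y)`, so the identity reduces to
`∑ η(x) [g_{f⁺(x,y)}(η) + g_{f⁺(x,y)}(η^{x,y})] = ∑ η(x) [g_{f⁻(x,y)}(η) + g_{f⁻(x,y)}(η^{x,y})]`.
Regrouping both sides by faces, a face collects its four anticlockwise edges on the left and its
four clockwise edges on the right, and the two contributions agree: a check on the 16 values of
the four corners.
-/

section StationarityOfUniformMeasures

variable {N : ℕ}

lemma swap_apply_left (η : Config N) (x y : Torus N) : swap η x y x = η y := by simp [swap]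

lemma swap_apply_right (η : Config N) (x y : Torus N) : swap η x y y = η x := by
  by_cases h : y = x
  · subst h; simp [swap]
  · simp [swap, h]

/-- `gfun` as a function of the corner values at `0, e¹, e², e¹ + e²`. -/
noncomputable def cornerG (α : ℝ) (p q r s : Bool) : ℝ :=
  if p = true ∧ s = true ∧ q = false ∧ r = false then α
  else if q = true ∧ r = true ∧ p = false ∧ s = false then α else 0

lemma trf_gfun_s1 (α : ℝ) (w : Torus N) (ξ : Config N) :
    trf w (gfun α) ξ = cornerG α (ξ w) (ξ (w + (1, 0))) (ξ (w + (0, 1))) (ξ (w + (1, 1))) := by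
  simp only [trf, trc, gfun, cornerG, sub_neg_eq_add, add_comm _ w, Prod.mk_zero_zero, add_zero]

lemma cornerG_ccw_eq_cw (α : ℝ) (p q r s : Bool) :
    bval p * (cornerG α p q r s + cornerG α q p r s)
      + bval q * (cornerG α p q r s + cornerG α p s r q)
      + bval s * (cornerG α p q r s + cornerG α p q s r)
      + bval r * (cornerG α p q r s + cornerG α r q p s)
    = bval p * (cornerG α p q r s + cornerG α r q p s)
      + bval r * (cornerG α p q r s + cornerG α p q s r)
      + bval s * (cornerG α p q r s + cornerG α p s r q)
      + bval q * (cornerG α p q r s + cornerG α q p r s) := by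
  cases p <;> cases q <;> cases r <;> cases s <;> simp [bval, cornerG]

/-- The weight `η(x) [g_𝔣(η) + g_𝔣(η^{x,y})]` of the directed edge `(x, y = x + dvec d)` with
respect to the face `𝔣` whose lower-left corner is `face x d`. -/
noncomputable def edgeFaceWeight (α : ℝ) (η : Config N) (face : Torus N → Fin 4 → Torus N)
    (x : Torus N) (d : Fin 4) : ℝ :=
  bval (η x) * (trf (face x d) (gfun α) η + trf (face x d) (gfun α) (swap η x (x + dvec N d)))

lemma faceCCW_eq_faceCW (h1 : (1 : ZMod N) ≠ 0) (α : ℝ) (η : Config N) (w : Torus N) :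
    faceCCW (edgeFaceWeight α η fplus) w = faceCW (edgeFaceWeight α η fminus) w := by
  obtain ⟨u, v⟩ := w
  simp only [faceCCW, faceCW, edgeFaceWeight, fplus, fminus, dvec, Matrix.cons_val_zero,
    Matrix.cons_val_one, Matrix.cons_val_two, Matrix.cons_val_three, Matrix.tail_cons,
    Matrix.head_cons, Prod.mk_add_mk, Prod.mk_sub_mk, trf_gfun_s1, swap, Prod.mk.injEq,
    add_sub_cancel_right, add_zero, sub_zero, add_neg_cancel_right]
  simp [h1]
  exact cornerG_ccw_eq_cw α (η (u, v)) (η (u + 1, v)) (η (u, v + 1)) (η (u + 1, v + 1))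

lemma sum_comp_add_right [NeZero N] (F : Torus N → ℝ) (v : Torus N) :
    ∑ x : Torus N, F (x + v) = ∑ x : Torus N, F x :=
  Fintype.sum_equiv (Equiv.addRight v) _ _ fun _ => rfl

lemma sum_faceCCW [NeZero N] (F : Torus N → Fin 4 → ℝ) :
    ∑ w : Torus N, faceCCW F w = ∑ x : Torus N, ∑ d : Fin 4, F x d := by
  simp only [faceCCW, Fin.sum_univ_four, sum_add_distrib]
  rw [sum_comp_add_right (F · 1), sum_comp_add_right (fun x => F (x + (0, 1)) 2),
    sum_comp_add_right (F · 2), sum_comp_add_right (F · 3)]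

lemma sum_faceCW [NeZero N] (F : Torus N → Fin 4 → ℝ) :
    ∑ w : Torus N, faceCW F w = ∑ x : Torus N, ∑ d : Fin 4, F x d := by
  simp only [faceCW, Fin.sum_univ_four, sum_add_distrib]
  rw [sum_comp_add_right (F · 0), sum_comp_add_right (fun x => F (x + (0, 1)) 3),
    sum_comp_add_right (F · 3), sum_comp_add_right (F · 2)]
  ring

lemma sum_edgeFaceWeight_fplus_eq_fminus [NeZero N] (h1 : (1 : ZMod N) ≠ 0) (α : ℝ)
    (η : Config N) :
    ∑ x : Torus N, ∑ d : Fin 4, edgeFaceWeight α η fplus x d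
      = ∑ x : Torus N, ∑ d : Fin 4, edgeFaceWeight α η fminus x d := by
  rw [← sum_faceCCW, ← sum_faceCW]
  exact sum_congr rfl fun w _ => faceCCW_eq_faceCW h1 α η w

lemma rate_swap_rev (α : ℝ) (η : Config N) (x : Torus N) (d : Fin 4) :
    rate α (swap η x (x + dvec N d)) (x + dvec N d) (rev d)
      = bval (η x) * (1 - bval (η (x + dvec N d)))
        + bval (η x) * (trf (fminus x d) (gfun α) (swap η x (x + dvec N d))
            - trf (fplus x d) (gfun α) (swap η x (x + dvec N d))) := by
  obtain ⟨u, v⟩ := x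
  fin_cases d <;>
    simp [rate, rev, dvec, fplus, fminus, swap_apply_left, swap_apply_right, Prod.mk_add_mk,
      sub_eq_add_neg, add_assoc]

end StationarityOfUniformMeasures

theorem stmt_1_general (N : ℕ) [NeZero N] (hN : 2 ≤ N) (α : ℝ) (η : Config N) :
    (∑ x : Torus N, ∑ d : Fin 4, rate α η x d)
      = ∑ x : Torus N, ∑ d : Fin 4,
          rate α (swap η x (x + dvec N d)) (x + dvec N d) (rev d) := by
  have : Fact (1 < N) := ⟨hN⟩
  have faces := sum_edgeFaceWeight_fplus_eq_fminus (one_ne_zero : (1 : ZMod N) ≠ 0) α η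
  simp only [rate_swap_rev]
  simp only [rate, edgeFaceWeight, mul_add, mul_sub, sum_add_distrib,
    sum_sub_distrib] at faces ⊢
  linarith

/-- stationarity of the uniform canonical measures,
`∑_{(x,y)∈E_N} c_{x,y}(η) = ∑_{(x,y)∈E_N} c_{y,x}(η^{x,y})`. -/
theorem stmt_1 (N : ℕ) [NeZero N] (hN : 2 ≤ N) (α : ℝ) (hα : |α| < 1) (η : Config N) :
    (∑ x : Torus N, ∑ d : Fin 4, rate α η x d)
      = ∑ x : Torus N, ∑ d : Fin 4,
          rate α (swap η x (x + dvec N d)) (x + dvec N d) (rev d) :=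
  stmt_1_general N hN α η
end

section
/- For every integer N ≥ 3, every α ∈ ℝ with 0 < |α| < 1 and every ρ ∈ (0,1), the model is not reversible with respect to ν_ρ: there exist a configuration η ∈ Σ_N and a directed edge (x,y) ∈ E_N such that ν_ρ(η) c_{x,y}(η) ≠ ν_ρ(η^{x,y}) c_{y,x}(η^{x,y}). -/
open Finset

lemma swap_eq_comp {N : ℕ} (η : Config N) (x y : Torus N) :
    ∀ z, swap η x y z = η (Equiv.swap x y z) := by
  intro z
  rw [Equiv.swap_apply_def]
  unfold swap
  split_ifs <;> rfl

lemma nu_swap {N : ℕ} [NeZero N] (ρ : ℝ) (η : Config N) (x y : Torus N) :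
    nu ρ (swap η x y) = nu ρ η := by
  unfold nu
  rw [← Equiv.prod_comp (Equiv.swap x y) (fun z => if η z then ρ else 1 - ρ)]
  exact Finset.prod_congr rfl fun z _ => by rw [swap_eq_comp]

lemma nu_pos {N : ℕ} [NeZero N] {ρ : ℝ} (hρ : ρ ∈ Set.Ioo (0 : ℝ) 1) (η : Config N) :
    0 < nu ρ η := by
  apply Finset.prod_pos
  intro x _
  split_ifs
  · exact hρ.1
  · linarith [hρ.2]

/-- for `0 < |α| < 1` the model is not reversible with respect to `ν_ρ`:
detailed balance fails on some configuration and some directed edge. -/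
theorem stmt_3 (N : ℕ) [NeZero N] (hN : 3 ≤ N) (α : ℝ) (hα0 : 0 < |α|) (hα1 : |α| < 1)
    (ρ : ℝ) (hρ : ρ ∈ Set.Ioo (0 : ℝ) 1) :
    ∃ (η : Config N) (x : Torus N) (d : Fin 4),
      nu ρ η * rate α η x d
        ≠ nu ρ (swap η x (x + dvec N d))
            * rate α (swap η x (x + dvec N d)) (x + dvec N d) (rev d) := by
  haveI : Fact (1 < N) := ⟨by omega⟩
  have h10 : (1 : ZMod N) ≠ 0 := one_ne_zero
  have h01 : (0 : ZMod N) ≠ 1 := h10.symm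
  have hm10 : (-1 : ZMod N) ≠ 0 := by simpa using h10
  have h0m1 : (0 : ZMod N) ≠ -1 := hm10.symm
  have h1m1 : (1 : ZMod N) ≠ -1 := by
    intro h
    have h2 : ((2 : ℕ) : ZMod N) = 0 := by push_cast; linear_combination h
    rw [ZMod.natCast_eq_zero_iff] at h2
    have := Nat.le_of_dvd (by norm_num) h2
    omega
  have hm11 : (-1 : ZMod N) ≠ 1 := h1m1.symm
  set η : Config N := fun z => decide (z = ((0, 0) : Torus N) ∨ z = ((1, 1) : Torus N)) with hη
  refine ⟨η, (0, 0), 0, ?_⟩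
  have hy : ((0, 0) : Torus N) + dvec N 0 = ((1, 0) : Torus N) := by
    simp [dvec, Prod.ext_iff]
  rw [hy, nu_swap]
  have hα : α ≠ 0 := abs_pos.mp hα0
  have hnu : nu ρ η ≠ 0 := (nu_pos hρ η).ne'
  -- point evaluations
  have e00 : η ((0, 0) : Torus N) = true := by simp [hη]
  have e11 : η ((1, 1) : Torus N) = true := by simp [hη]
  have e10 : η ((1, 0) : Torus N) = false := by simp [hη, Prod.ext_iff, h10, h01]
  have e01 : η ((0, 1) : Torus N) = false := by simp [hη, Prod.ext_iff, h01, h10]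
  have e0m1 : η ((0, -1) : Torus N) = false := by simp [hη, Prod.ext_iff, h0m1, hm10, hm11]
  have e1m1 : η ((1, -1) : Torus N) = false := by simp [hη, Prod.ext_iff, h10, hm11, hm10]
  have e00' : η (0 : Torus N) = true := e00
  have e11' : η (1 : Torus N) = true := e11
  have q1 : ((1 : Torus N) - (0, 1)) = ((1, 0) : Torus N) := by
    show ((1, 1) : Torus N) - (0, 1) = (1, 0)
    simp [Prod.ext_iff]
  -- swapped config evaluations
  set ξ : Config N := swap η (0, 0) (1, 0) with hξ
  have f00 : ξ ((0, 0) : Torus N) = false := by simp [hξ, swap, e10]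
  have f10 : ξ ((1, 0) : Torus N) = true := by simp [hξ, swap, Prod.ext_iff, h10, e00, e00']
  have f11 : ξ ((1, 1) : Torus N) = true := by simp [hξ, swap, Prod.ext_iff, h10, h01, e11, e11']
  have f01 : ξ ((0, 1) : Torus N) = false := by simp [hξ, swap, Prod.ext_iff, h01, h10, e01]
  have f0m1 : ξ ((0, -1) : Torus N) = false := by
    simp [hξ, swap, Prod.ext_iff, h0m1, hm10, hm11, e0m1]
  have f1m1 : ξ ((1, -1) : Torus N) = false := by
    simp [hξ, swap, Prod.ext_iff, hm10, hm11, e1m1]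
  have f00' : ξ (0 : Torus N) = false := f00
  have f11' : ξ (1 : Torus N) = true := f11
  -- compute forward rate
  have hrate1 : rate α η (0, 0) 0 = 1 + α := by
    rw [rate, hy]
    simp only [trf, trc, fplus, fminus, gfun, dvec, bval]
    norm_num [Prod.ext_iff, q1, e00', e11', e00, e11, e10, e01, e0m1, e1m1]
  -- compute reverse rate
  have hrev : rev 0 = 2 := rfl
  have hrate2 : rate α ξ (1, 0) 2 = 1 := by
    rw [rate]
    have hy2 : ((1, 0) : Torus N) + dvec N 2 = ((0, 0) : Torus N) := by
      simp [dvec, Prod.ext_iff]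
    rw [hy2]
    simp only [trf, trc, fplus, fminus, gfun, bval]
    norm_num [Prod.ext_iff, q1, f00', f11', f00, f11, f10, f01, f0m1, f1m1, Matrix.cons_val_two,
      Matrix.tail_cons, Matrix.head_cons]
  rw [hrate1, hrev, hrate2]
  intro h
  have : (1 : ℝ) + α = 1 := mul_left_cancel₀ hnu h
  exact hα (by linarith)
end

section
/- (Discrete Hodge decomposition on the two-dimensional discrete torus.) For every integer N ≥ 2, every discrete vector field φ : E_N → ℝ can be written as φ = ∇f + δψ + c₁φ^{(1)} + c₂φ^{(2)}, where f : Λ_N → ℝ, ψ is a 2-form, c₁, c₂ ∈ ℝ, ∇f(x,y) := f(y) − f(x), and φ^{(i)} is the harmonic field defined by φ^{(i)}(x, x+e^{(j)}) = δ_{i,j}. The three summands ∇f, δψ and c₁φ^{(1)}+c₂φ^{(2)} are pairwise orthogonal with respect to the scalar product ⟨φ,φ'⟩ = ∑_{(x,y)∈E_N} φ(x,y)φ'(x,y), and they are uniquely determined by φ. Moreover, the subspace of gradient fields ∇Γ⁰ and the subspace of circulations δΓ² each have dimension N² − 1, and the harmonic subspace spanned by φ^{(1)}, φ^{(2)} has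 dimension 2. -/
open Finset

/-- A discrete vector field, encoded by its values `φ x d` on the directed edge
`(x, x + dvec d)`; antisymmetry is the compatibility of the two encodings of each edge. -/
def IsVF {N : ℕ} (φ : Torus N → Fin 4 → ℝ) : Prop :=
  ∀ (x : Torus N) (d : Fin 4), φ (x + dvec N d) (rev d) = -φ x d

/-- The gradient discrete vector field `∇f(x,y) = f(y) - f(x)`. -/
noncomputable def gradVF {N : ℕ} (f : Torus N → ℝ) : Torus N → Fin 4 → ℝ :=
  fun x d => f (x + dvec N d) - f x

/-- A 2-form: a map on oriented faces `(corner, orientation)` antisymmetric under change of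
orientation (`true` = anticlockwise, `false` = clockwise). -/
def Is2Form {N : ℕ} (ψ : Torus N × Bool → ℝ) : Prop :=
  ∀ w : Torus N, ψ (w, false) = -ψ (w, true)

/-- The boundary `δψ` of a 2-form: `δψ(e) = ∑_{f : e ∈ f} ψ(f)`. -/
noncomputable def deltaVF {N : ℕ} (ψ : Torus N × Bool → ℝ) : Torus N → Fin 4 → ℝ :=
  fun x d => ψ (fplus x d, true) + ψ (fminus x d, false)

/-- The harmonic fields `φ⁽¹⁾, φ⁽²⁾` with `φ⁽ⁱ⁾(x, x+e⁽ʲ⁾) = δ_{ij}`. -/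
noncomputable def harmVF (N : ℕ) (i : Fin 2) : Torus N → Fin 4 → ℝ :=
  fun _ d => ![![1, 0, -1, 0], ![0, 1, 0, -1]] i d

/-- The scalar product `⟨φ,φ'⟩ = ∑_{(x,y)∈E_N} φ(x,y) φ'(x,y)`. -/
noncomputable def vfInner {N : ℕ} [NeZero N] (φ φ' : Torus N → Fin 4 → ℝ) : ℝ :=
  ∑ x : Torus N, ∑ d : Fin 4, φ x d * φ' x d

section HodgeAux

variable {N : ℕ}

lemma negE1 : ((-1, 0) : Torus N) = -(1, 0) := by simp [Prod.ext_iff]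
lemma negE2 : ((0, -1) : Torus N) = -(0, 1) := by simp [Prod.ext_iff]

@[simp] lemma dvec_0 : dvec N 0 = (1,0) := rfl
@[simp] lemma dvec_1 : dvec N 1 = (0,1) := rfl
@[simp] lemma dvec_2 : dvec N 2 = -(1,0) := negE1
@[simp] lemma dvec_3 : dvec N 3 = -(0,1) := negE2
@[simp] lemma rev_0 : rev 0 = 2 := rfl
@[simp] lemma rev_1 : rev 1 = 3 := rfl
@[simp] lemma rev_2 : rev 2 = 0 := rfl
@[simp] lemma rev_3 : rev 3 = 1 := rfl
@[simp] lemma fplus_0 (x : Torus N) : fplus x 0 = x := rfl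
@[simp] lemma fplus_1 (x : Torus N) : fplus x 1 = x - (1,0) := rfl
@[simp] lemma fplus_2 (x : Torus N) : fplus x 2 = x - (1,0) - (0,1) := rfl
@[simp] lemma fplus_3 (x : Torus N) : fplus x 3 = x - (0,1) := rfl
@[simp] lemma fminus_0 (x : Torus N) : fminus x 0 = x - (0,1) := rfl
@[simp] lemma fminus_1 (x : Torus N) : fminus x 1 = x := rfl
@[simp] lemma fminus_2 (x : Torus N) : fminus x 2 = x - (1,0) := rfl
@[simp] lemma fminus_3 (x : Torus N) : fminus x 3 = x - (1,0) - (0,1) := rfl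
@[simp] lemma harm_0_0 (x : Torus N) : harmVF N 0 x 0 = 1 := rfl
@[simp] lemma harm_0_1 (x : Torus N) : harmVF N 0 x 1 = 0 := rfl
@[simp] lemma harm_0_2 (x : Torus N) : harmVF N 0 x 2 = -1 := rfl
@[simp] lemma harm_0_3 (x : Torus N) : harmVF N 0 x 3 = 0 := rfl
@[simp] lemma harm_1_0 (x : Torus N) : harmVF N 1 x 0 = 0 := rfl
@[simp] lemma harm_1_1 (x : Torus N) : harmVF N 1 x 1 = 1 := rfl
@[simp] lemma harm_1_2 (x : Torus N) : harmVF N 1 x 2 = 0 := rfl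
@[simp] lemma harm_1_3 (x : Torus N) : harmVF N 1 x 3 = -1 := rfl

end HodgeAux
section HodgeAux2

variable {N : ℕ}

lemma tsum_translate [NeZero N] (t : Torus N) (F : Torus N → ℝ) :
    ∑ x : Torus N, F (x + t) = ∑ x : Torus N, F x :=
  Fintype.sum_equiv (Equiv.addRight t) _ _ (fun _ => rfl)

lemma tsum_translate_sub [NeZero N] (t : Torus N) (F : Torus N → ℝ) :
    ∑ x : Torus N, F (x - t) = ∑ x : Torus N, F x :=
  Fintype.sum_equiv (Equiv.subRight t) _ _ (fun _ => rfl)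

noncomputable def gradL (N : ℕ) : (Torus N → ℝ) →ₗ[ℝ] (Torus N → Fin 4 → ℝ) where
  toFun := gradVF
  map_add' f g := by funext x d; simp [gradVF]; ring
  map_smul' c f := by funext x d; simp [gradVF]; ring

noncomputable def delFun (g : Torus N → ℝ) : Torus N → Fin 4 → ℝ :=
  fun x d => g (fplus x d) - g (fminus x d)

noncomputable def delL (N : ℕ) : (Torus N → ℝ) →ₗ[ℝ] (Torus N → Fin 4 → ℝ) where
  toFun := delFun
  map_add' f g := by funext x d; simp [delFun]; ring
  map_smul' c f := by funext x d; simp [delFun]; ring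

def psiOf (g : Torus N → ℝ) : Torus N × Bool → ℝ := fun p => if p.2 then g p.1 else -g p.1

lemma is2Form_psiOf (g : Torus N → ℝ) : Is2Form (psiOf g) := fun w => by simp [psiOf]

lemma deltaVF_psiOf (g : Torus N → ℝ) : deltaVF (psiOf g) = delFun g := by
  funext x d; simp [deltaVF, psiOf, delFun, sub_eq_add_neg]

lemma deltaVF_eq_delFun {ψ : Torus N × Bool → ℝ} (hψ : Is2Form ψ) :
    deltaVF ψ = delFun (fun w => ψ (w, true)) := by
  funext x d; simp [deltaVF, delFun, hψ _, sub_eq_add_neg]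

noncomputable def B (N : ℕ) [NeZero N] :
    (Torus N → Fin 4 → ℝ) →ₗ[ℝ] (Torus N → Fin 4 → ℝ) →ₗ[ℝ] ℝ :=
  LinearMap.mk₂ ℝ vfInner
    (fun f g h => by simp [vfInner, add_mul, Finset.sum_add_distrib])
    (fun c f g => by simp [vfInner, Finset.mul_sum, mul_assoc])
    (fun f g h => by simp [vfInner, mul_add, Finset.sum_add_distrib])
    (fun c f g => by
      simp only [vfInner, smul_eq_mul, Finset.mul_sum, Pi.smul_apply]
      congr 1; funext x; congr 1; funext d; ring)

@[simp] lemma B_apply [NeZero N] (φ φ' : Torus N → Fin 4 → ℝ) : B N φ φ' = vfInner φ φ' := rfl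

lemma vfInner_comm [NeZero N] (φ φ' : Torus N → Fin 4 → ℝ) : vfInner φ φ' = vfInner φ' φ := by
  simp [vfInner, mul_comm]

lemma vfInner_self_eq_zero [NeZero N] {φ : Torus N → Fin 4 → ℝ} (h : vfInner φ φ = 0) :
    φ = 0 := by
  have hs : vfInner φ φ = ∑ x : Torus N, ∑ d : Fin 4, (φ x d)^2 := by
    simp [vfInner, sq]
  rw [hs] at h
  have h1 := (Finset.sum_eq_zero_iff_of_nonneg
    (fun x _ => Finset.sum_nonneg fun d _ => sq_nonneg _)).mp h
  funext x d
  have h2 := (Finset.sum_eq_zero_iff_of_nonneg (fun d _ => sq_nonneg (φ x d))).mp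
    (h1 x (Finset.mem_univ x)) d (Finset.mem_univ d)
  exact pow_eq_zero_iff (two_ne_zero) |>.mp h2

end HodgeAux2
section HodgeAux3

variable {N : ℕ}

lemma orthGH0 [NeZero N] (f : Torus N → ℝ) : vfInner (gradVF f) (harmVF N 0) = 0 := by
  have key : ∀ x : Torus N, ∑ d : Fin 4, gradVF f x d * harmVF N 0 x d
      = f (x + (1,0)) - f (x + -(1,0)) := by
    intro x
    rw [Fin.sum_univ_four]
    simp [gradVF]
  rw [vfInner]
  simp only [key]
  rw [Finset.sum_sub_distrib, tsum_translate, tsum_translate, sub_self]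

lemma orthGH1 [NeZero N] (f : Torus N → ℝ) : vfInner (gradVF f) (harmVF N 1) = 0 := by
  have key : ∀ x : Torus N, ∑ d : Fin 4, gradVF f x d * harmVF N 1 x d
      = f (x + (0,1)) - f (x + -(0,1)) := by
    intro x
    rw [Fin.sum_univ_four]
    simp [gradVF]
  rw [vfInner]
  simp only [key]
  rw [Finset.sum_sub_distrib, tsum_translate, tsum_translate, sub_self]

lemma orthDH0 [NeZero N] (g : Torus N → ℝ) : vfInner (delFun g) (harmVF N 0) = 0 := by
  have key : ∀ x : Torus N, ∑ d : Fin 4, delFun g x d * harmVF N 0 x d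
      = (g x + g (x - (1,0))) - (g (x - (0,1)) + g (x - (1,0) - (0,1))) := by
    intro x
    rw [Fin.sum_univ_four]
    simp [delFun]; ring
  rw [vfInner]
  simp only [key]
  rw [Finset.sum_sub_distrib, Finset.sum_add_distrib, Finset.sum_add_distrib,
    tsum_translate_sub]
  have h3 : ∑ x : Torus N, g (x - (1,0) - (0,1)) = ∑ x : Torus N, g (x - (0,1)) :=
    tsum_translate_sub (1,0) (fun y => g (y - (0,1)))
  rw [h3, tsum_translate_sub]
  ring

lemma orthDH1 [NeZero N] (g : Torus N → ℝ) : vfInner (delFun g) (harmVF N 1) = 0 := by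
  have key : ∀ x : Torus N, ∑ d : Fin 4, delFun g x d * harmVF N 1 x d
      = (g (x - (1,0)) + g (x - (1,0) - (0,1))) - (g x + g (x - (0,1))) := by
    intro x
    rw [Fin.sum_univ_four]
    simp [delFun]; ring
  rw [vfInner]
  simp only [key]
  rw [Finset.sum_sub_distrib, Finset.sum_add_distrib, Finset.sum_add_distrib]
  have h3 : ∑ x : Torus N, g (x - (1,0) - (0,1)) = ∑ x : Torus N, g (x - (0,1)) :=
    tsum_translate_sub (1,0) (fun y => g (y - (0,1)))
  rw [h3, tsum_translate_sub]
  ring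

end HodgeAux3
section HodgeAux4

variable {N : ℕ}

lemma faceA (f : Torus N → ℝ) (w : Torus N) :
    gradVF f w 0 + gradVF f (w + (1,0)) 1 + gradVF f (w + (1,0) + (0,1)) 2
      + gradVF f (w + (0,1)) 3 = 0 := by
  have p1 : w + (1,0) + (0,1) + -(1,0) = w + (0,1) := by abel
  have p2 : w + (0,1) + -(0,1) = w := by abel
  simp only [gradVF, dvec_0, dvec_1, dvec_2, dvec_3, p1, p2]
  ring

lemma faceB (f : Torus N → ℝ) (w : Torus N) :
    gradVF f (w + (0,1)) 0 + gradVF f w 1 + gradVF f (w + (1,0)) 2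
      + gradVF f (w + (1,0) + (0,1)) 3 = 0 := by
  have p1 : w + (0,1) + (1,0) = w + (1,0) + (0,1) := by abel
  have p2 : w + (1,0) + -(1,0) = w := by abel
  have p3 : w + (1,0) + (0,1) + -(0,1) = w + (1,0) := by abel
  simp only [gradVF, dvec_0, dvec_1, dvec_2, dvec_3, p1, p2, p3]
  ring

lemma sumA [NeZero N] (f g : Torus N → ℝ) :
    ∑ x : Torus N, ∑ d : Fin 4, gradVF f x d * g (fplus x d) = 0 := by
  have expand : ∀ x : Torus N, ∑ d : Fin 4, gradVF f x d * g (fplus x d)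
      = gradVF f x 0 * g x + gradVF f x 1 * g (x - (1,0))
        + gradVF f x 2 * g (x - (1,0) - (0,1)) + gradVF f x 3 * g (x - (0,1)) := by
    intro x; rw [Fin.sum_univ_four]; simp
  simp only [expand]
  rw [Finset.sum_add_distrib, Finset.sum_add_distrib, Finset.sum_add_distrib]
  have e1 : ∑ x : Torus N, gradVF f x 1 * g (x - (1,0))
      = ∑ w : Torus N, gradVF f (w + (1,0)) 1 * g w := by
    rw [← tsum_translate ((1,0) : Torus N) (fun x => gradVF f x 1 * g (x - (1,0)))]
    simp
  have e2 : ∑ x : Torus N, gradVF f x 2 * g (x - (1,0) - (0,1))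
      = ∑ w : Torus N, gradVF f (w + (1,0) + (0,1)) 2 * g w := by
    rw [← tsum_translate ((1,0) + (0,1) : Torus N)
      (fun x => gradVF f x 2 * g (x - (1,0) - (0,1)))]
    apply Finset.sum_congr rfl
    intro w _
    have : w + ((1,0) + (0,1)) - (1,0) - (0,1) = w := by abel
    rw [this, ← add_assoc]
  have e3 : ∑ x : Torus N, gradVF f x 3 * g (x - (0,1))
      = ∑ w : Torus N, gradVF f (w + (0,1)) 3 * g w := by
    rw [← tsum_translate ((0,1) : Torus N) (fun x => gradVF f x 3 * g (x - (0,1)))]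
    simp
  rw [e1, e2, e3, ← Finset.sum_add_distrib, ← Finset.sum_add_distrib,
    ← Finset.sum_add_distrib]
  apply Finset.sum_eq_zero
  intro w _
  linear_combination (faceA f w) * g w

lemma sumB [NeZero N] (f g : Torus N → ℝ) :
    ∑ x : Torus N, ∑ d : Fin 4, gradVF f x d * g (fminus x d) = 0 := by
  have expand : ∀ x : Torus N, ∑ d : Fin 4, gradVF f x d * g (fminus x d)
      = gradVF f x 0 * g (x - (0,1)) + gradVF f x 1 * g x
        + gradVF f x 2 * g (x - (1,0)) + gradVF f x 3 * g (x - (1,0) - (0,1)) := by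
    intro x; rw [Fin.sum_univ_four]; simp
  simp only [expand]
  rw [Finset.sum_add_distrib, Finset.sum_add_distrib, Finset.sum_add_distrib]
  have e0 : ∑ x : Torus N, gradVF f x 0 * g (x - (0,1))
      = ∑ w : Torus N, gradVF f (w + (0,1)) 0 * g w := by
    rw [← tsum_translate ((0,1) : Torus N) (fun x => gradVF f x 0 * g (x - (0,1)))]
    simp
  have e2 : ∑ x : Torus N, gradVF f x 2 * g (x - (1,0))
      = ∑ w : Torus N, gradVF f (w + (1,0)) 2 * g w := by
    rw [← tsum_translate ((1,0) : Torus N) (fun x => gradVF f x 2 * g (x - (1,0)))]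
    simp
  have e3 : ∑ x : Torus N, gradVF f x 3 * g (x - (1,0) - (0,1))
      = ∑ w : Torus N, gradVF f (w + (1,0) + (0,1)) 3 * g w := by
    rw [← tsum_translate ((1,0) + (0,1) : Torus N)
      (fun x => gradVF f x 3 * g (x - (1,0) - (0,1)))]
    apply Finset.sum_congr rfl
    intro w _
    have : w + ((1,0) + (0,1)) - (1,0) - (0,1) = w := by abel
    rw [this, ← add_assoc]
  rw [e0, e2, e3, ← Finset.sum_add_distrib, ← Finset.sum_add_distrib,
    ← Finset.sum_add_distrib]
  apply Finset.sum_eq_zero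
  intro w _
  linear_combination (faceB f w) * g w

lemma orthGD [NeZero N] (f g : Torus N → ℝ) : vfInner (gradVF f) (delFun g) = 0 := by
  have : vfInner (gradVF f) (delFun g)
      = (∑ x : Torus N, ∑ d : Fin 4, gradVF f x d * g (fplus x d))
        - ∑ x : Torus N, ∑ d : Fin 4, gradVF f x d * g (fminus x d) := by
    rw [vfInner, ← Finset.sum_sub_distrib]
    apply Finset.sum_congr rfl
    intro x _
    rw [← Finset.sum_sub_distrib]
    apply Finset.sum_congr rfl
    intro d _
    simp [delFun]; ring
  rw [this, sumA, sumB, sub_self]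

end HodgeAux4
section HodgeAux5

variable {N : ℕ}

lemma isVF_grad (f : Torus N → ℝ) : IsVF (gradVF f) := by
  intro x d
  fin_cases d
  · have p : x + (1,0) + ((-1,0) : Torus N) = x := by rw [negE1]; abel
    simp [gradVF, p]
  · have p : x + (0,1) + ((0,-1) : Torus N) = x := by rw [negE2]; abel
    simp [gradVF, p]
  · have p : x + ((-1,0) : Torus N) + (1,0) = x := by rw [negE1]; abel
    simp [gradVF, p]
  · have p : x + ((0,-1) : Torus N) + (0,1) = x := by rw [negE2]; abel
    simp [gradVF, p]

lemma isVF_del (g : Torus N → ℝ) : IsVF (delFun g) := by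
  intro x d
  fin_cases d
  · have p1 : x + (1,0) - (1,0) - (0,1) = x - (0,1) := by abel
    have p2 : x + (1,0) - (1,0) = x := by abel
    simp [delFun, p1, p2]
  · have p1 : x + (0,1) - (0,1) = x := by abel
    have p2 : x + (0,1) - (1,0) - (0,1) = x - (1,0) := by abel
    simp [delFun, p1, p2]
  · have p1 : x + ((-1,0) : Torus N) = x - (1,0) := by rw [negE1]; abel
    have p2 : x + ((-1,0) : Torus N) - (0,1) = x - (1,0) - (0,1) := by rw [negE1]; abel
    simp [delFun, p1, p2]
  · have p1 : x + ((0,-1) : Torus N) - (1,0) = x - (1,0) - (0,1) := by rw [negE2]; abel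
    have p2 : x + ((0,-1) : Torus N) = x - (0,1) := by rw [negE2]; abel
    have p3 : x - (0,1) - (1,0) = x - (1,0) - (0,1) := by abel
    simp [delFun, p1, p2, p3]

lemma isVF_harm (i : Fin 2) : IsVF (harmVF N i) := by
  intro x d
  fin_cases i <;> fin_cases d <;> simp

def vfSub (N : ℕ) [NeZero N] : Submodule ℝ (Torus N → Fin 4 → ℝ) where
  carrier := {φ | IsVF φ}
  add_mem' := fun {a b} ha hb x d => by
    simp only [Pi.add_apply, ha x d, hb x d]; ring
  zero_mem' := fun x d => by simp
  smul_mem' := fun c a ha x d => by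
    simp only [Pi.smul_apply, ha x d, smul_eq_mul]; ring

noncomputable def resL (N : ℕ) [NeZero N] :
    (Torus N → Fin 4 → ℝ) →ₗ[ℝ] (Torus N → Fin 2 → ℝ) where
  toFun φ := fun x i => φ x (Fin.castLE (by norm_num) i)
  map_add' _ _ := rfl
  map_smul' _ _ := rfl

noncomputable def extVF (h : Torus N → Fin 2 → ℝ) : Torus N → Fin 4 → ℝ :=
  fun x d => ![h x 0, h x 1, -h (x - (1,0)) 0, -h (x - (0,1)) 1] d

lemma isVF_ext (h : Torus N → Fin 2 → ℝ) : IsVF (extVF h) := by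
  intro x d
  fin_cases d
  · have p : x + (1,0) - (1,0) = x := by abel
    simp [extVF, p]
  · have p : x + (0,1) - (0,1) = x := by abel
    simp [extVF, p]
  · have p : x + ((-1,0) : Torus N) = x - (1,0) := by rw [negE1]; abel
    simp [extVF, p]
  · have p : x + ((0,-1) : Torus N) = x - (0,1) := by rw [negE2]; abel
    simp [extVF, p]

lemma resL_ext [NeZero N] (h : Torus N → Fin 2 → ℝ) : resL N (extVF h) = h := by
  funext x i
  fin_cases i <;> rfl

lemma vf_eq_of_res {φ φ' : Torus N → Fin 4 → ℝ} [NeZero N] (hφ : IsVF φ) (hφ' : IsVF φ')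
    (h : resL N φ = resL N φ') : φ = φ' := by
  have h01 : ∀ (x : Torus N) (i : Fin 2), φ x (Fin.castLE (by norm_num) i)
      = φ' x (Fin.castLE (by norm_num) i) := fun x i => congrFun (congrFun h x) i
  have h0 : ∀ x : Torus N, φ x 0 = φ' x 0 := fun x => h01 x 0
  have h1 : ∀ x : Torus N, φ x 1 = φ' x 1 := fun x => h01 x 1
  funext x d
  fin_cases d
  · exact h0 x
  · exact h1 x
  · have p : x - (1,0) + (1,0) = x := by abel
    have e := hφ (x - (1,0)) 0
    have e' := hφ' (x - (1,0)) 0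
    rw [dvec_0, p, rev_0] at e e'
    rw [show (⟨2, by norm_num⟩ : Fin 4) = 2 from rfl, e, e', h0]
  · have p : x - (0,1) + (0,1) = x := by abel
    have e := hφ (x - (0,1)) 1
    have e' := hφ' (x - (0,1)) 1
    rw [dvec_1, p, rev_1] at e e'
    rw [show (⟨3, by norm_num⟩ : Fin 4) = 3 from rfl, e, e', h1]

noncomputable def vfEquiv (N : ℕ) [NeZero N] : vfSub N ≃ₗ[ℝ] (Torus N → Fin 2 → ℝ) :=
  LinearEquiv.ofBijective ((resL N).domRestrict (vfSub N))
    ⟨fun a b hab => Subtype.ext (vf_eq_of_res a.2 b.2 hab),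
     fun h => ⟨⟨extVF h, isVF_ext h⟩, resL_ext h⟩⟩

lemma card_torus [NeZero N] : Fintype.card (Torus N) = N ^ 2 := by
  simp [ZMod.card, sq]

lemma finrank_vfSub [NeZero N] : Module.finrank ℝ (vfSub N) = 2 * N ^ 2 := by
  rw [(vfEquiv N).finrank_eq, Module.finrank_pi_fintype]
  simp only [Module.finrank_fintype_fun_eq_card, Fintype.card_fin, Finset.sum_const,
    Finset.card_univ, smul_eq_mul, card_torus]
  ring

end HodgeAux5
section HodgeAux6

variable {N : ℕ}

lemma const_of_steps [NeZero N] {f : Torus N → ℝ}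
    (h1 : ∀ x : Torus N, f (x + (1,0)) = f x)
    (h2 : ∀ x : Torus N, f (x + (0,1)) = f x) : ∀ x, f x = f 0 := by
  have key1 : ∀ (k : ℕ) (x : Torus N), f (x + ((k : ZMod N), 0)) = f x := by
    intro k
    induction k with
    | zero => intro x; norm_num; congr 1; ext <;> simp
    | succ n ih =>
      intro x
      have e : (((n+1 : ℕ) : ZMod N), (0 : ZMod N)) = ((n : ZMod N), (0:ZMod N)) + (1,0) := by
        simp [Prod.ext_iff]
      rw [e, ← add_assoc, h1, ih]
  have key2 : ∀ (k : ℕ) (x : Torus N), f (x + (0, (k : ZMod N))) = f x := by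
    intro k
    induction k with
    | zero => intro x; norm_num; congr 1; ext <;> simp
    | succ n ih =>
      intro x
      have e : ((0 : ZMod N), ((n+1 : ℕ) : ZMod N)) = ((0:ZMod N), (n : ZMod N)) + (0,1) := by
        simp [Prod.ext_iff]
      rw [e, ← add_assoc, h2, ih]
  rintro ⟨a, b⟩
  obtain ⟨ka, rfl⟩ := ZMod.natCast_zmod_surjective a
  obtain ⟨kb, rfl⟩ := ZMod.natCast_zmod_surjective b
  have e : (((ka : ℕ) : ZMod N), ((kb : ℕ) : ZMod N))
      = ((0 : Torus N) + ((ka : ZMod N), 0)) + (0, (kb : ZMod N)) := by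
    simp [Prod.ext_iff]
  rw [e, key2, key1]

lemma ker_gradL [NeZero N] :
    LinearMap.ker (gradL N) = Submodule.span ℝ {(fun _ => 1 : Torus N → ℝ)} := by
  ext f
  rw [LinearMap.mem_ker, Submodule.mem_span_singleton]
  constructor
  · intro h
    have h1 : ∀ x : Torus N, f (x + (1,0)) = f x := by
      intro x
      have h' : gradVF f = 0 := h
      have := congrFun (congrFun h' x) 0
      simp only [gradVF, dvec_0, Pi.zero_apply] at this
      linarith
    have h2 : ∀ x : Torus N, f (x + (0,1)) = f x := by
      intro x
      have h' : gradVF f = 0 := h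
      have := congrFun (congrFun h' x) 1
      simp only [gradVF, dvec_1, Pi.zero_apply] at this
      linarith
    exact ⟨f 0, by funext x; simp [(const_of_steps h1 h2 x)]⟩
  · rintro ⟨c, rfl⟩
    show gradVF _ = 0
    funext x d
    simp [gradVF]

lemma ker_delL [NeZero N] :
    LinearMap.ker (delL N) = Submodule.span ℝ {(fun _ => 1 : Torus N → ℝ)} := by
  ext g
  rw [LinearMap.mem_ker, Submodule.mem_span_singleton]
  constructor
  · intro h
    have h1 : ∀ x : Torus N, g (x + (1,0)) = g x := by
      intro x
      have h' : delFun g = 0 := h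
      have := congrFun (congrFun h' (x + (1,0))) 1
      simp only [delFun, fplus_1, fminus_1, Pi.zero_apply] at this
      have p : x + (1,0) - (1,0) = x := by abel
      rw [p] at this
      linarith
    have h2 : ∀ x : Torus N, g (x + (0,1)) = g x := by
      intro x
      have h' : delFun g = 0 := h
      have := congrFun (congrFun h' (x + (0,1))) 0
      simp only [delFun, fplus_0, fminus_0, Pi.zero_apply] at this
      have p : x + (0,1) - (0,1) = x := by abel
      rw [p] at this
      linarith
    exact ⟨g 0, by funext x; simp [(const_of_steps h1 h2 x)]⟩
  · rintro ⟨c, rfl⟩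
    show delFun _ = 0
    funext x d
    simp [delFun]

lemma const_ne_zero [NeZero N] : (fun _ => 1 : Torus N → ℝ) ≠ 0 := by
  intro h
  have := congrFun h 0
  norm_num at this

lemma finrank_fun [NeZero N] : Module.finrank ℝ (Torus N → ℝ) = N ^ 2 := by
  rw [Module.finrank_fintype_fun_eq_card, card_torus]

lemma finrank_rangeG [NeZero N] :
    Module.finrank ℝ (LinearMap.range (gradL N)) = N ^ 2 - 1 := by
  have h := LinearMap.finrank_range_add_finrank_ker (gradL N)
  rw [finrank_fun, ker_gradL, finrank_span_singleton const_ne_zero] at h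
  omega

lemma finrank_rangeD [NeZero N] :
    Module.finrank ℝ (LinearMap.range (delL N)) = N ^ 2 - 1 := by
  have h := LinearMap.finrank_range_add_finrank_ker (delL N)
  rw [finrank_fun, ker_delL, finrank_span_singleton const_ne_zero] at h
  omega

lemma harm_indep [NeZero N] :
    LinearIndependent ℝ ![harmVF N 0, harmVF N 1] := by
  rw [LinearIndependent.pair_iff]
  intro s t hst
  have h0 := congrFun (congrFun hst 0) 0
  have h1 := congrFun (congrFun hst 0) 1
  simp at h0 h1
  exact ⟨h0, h1⟩

lemma finrank_H [NeZero N] :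
    Module.finrank ℝ (Submodule.span ℝ {harmVF N 0, harmVF N 1}) = 2 := by
  have hr : ({harmVF N 0, harmVF N 1} : Set (Torus N → Fin 4 → ℝ))
      = Set.range ![harmVF N 0, harmVF N 1] := by
    ext y
    simp [Fin.exists_fin_two, or_comm]
  rw [hr, finrank_span_eq_card harm_indep]
  simp

end HodgeAux6
section HodgeAux7

variable {N : ℕ}

lemma vfInner_add_left [NeZero N] (a b c : Torus N → Fin 4 → ℝ) :
    vfInner (a + b) c = vfInner a c + vfInner b c := by
  rw [show vfInner (a + b) c = B N (a + b) c from rfl, map_add, LinearMap.add_apply]; rfl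

lemma vfInner_smul_left [NeZero N] (s : ℝ) (a c : Torus N → Fin 4 → ℝ) :
    vfInner (s • a) c = s * vfInner a c := by
  rw [show vfInner (s • a) c = B N (s • a) c from rfl, map_smul, LinearMap.smul_apply]; rfl

lemma vfInner_add_right [NeZero N] (a b c : Torus N → Fin 4 → ℝ) :
    vfInner c (a + b) = vfInner c a + vfInner c b := map_add (B N c) a b

lemma vfInner_smul_right [NeZero N] (s : ℝ) (a c : Torus N → Fin 4 → ℝ) :
    vfInner c (s • a) = s * vfInner c a := map_smul (B N c) s a

lemma vfInner_H_right [NeZero N] {p q : Torus N → Fin 4 → ℝ}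
    (hp0 : vfInner p (harmVF N 0) = 0) (hp1 : vfInner p (harmVF N 1) = 0)
    (hq : q ∈ Submodule.span ℝ {harmVF N 0, harmVF N 1}) : vfInner p q = 0 := by
  obtain ⟨s, t, rfl⟩ := Submodule.mem_span_pair.mp hq
  rw [vfInner_add_right, vfInner_smul_right, vfInner_smul_right, hp0, hp1]
  ring

lemma inf_bot_of_orth [NeZero N] {P Q : Submodule ℝ (Torus N → Fin 4 → ℝ)}
    (h : ∀ p ∈ P, ∀ q ∈ Q, vfInner p q = 0) : P ⊓ Q = ⊥ := by
  rw [eq_bot_iff]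
  rintro x ⟨hxP, hxQ⟩
  exact (Submodule.mem_bot ℝ).mpr (vfInner_self_eq_zero (h x hxP x hxQ))

lemma orth_GD [NeZero N] :
    ∀ p ∈ LinearMap.range (gradL N), ∀ q ∈ LinearMap.range (delL N),
      vfInner p q = 0 := by
  rintro _ ⟨f, rfl⟩ _ ⟨g, rfl⟩
  exact orthGD f g

lemma orth_GDH [NeZero N] :
    ∀ p ∈ LinearMap.range (gradL N) ⊔ LinearMap.range (delL N),
      ∀ q ∈ Submodule.span ℝ {harmVF N 0, harmVF N 1}, vfInner p q = 0 := by
  intro p hp q hq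
  obtain ⟨a, ha, b, hb, rfl⟩ := Submodule.mem_sup.mp hp
  obtain ⟨f, rfl⟩ := ha
  obtain ⟨g, rfl⟩ := hb
  rw [show (gradL N) f = gradVF f from rfl, show (delL N) g = delFun g from rfl,
    vfInner_add_left]
  rw [vfInner_H_right (orthGH0 f) (orthGH1 f) hq, vfInner_H_right (orthDH0 g) (orthDH1 g) hq]
  ring

lemma sup_eq_vfSub [NeZero N] :
    (LinearMap.range (gradL N) ⊔ LinearMap.range (delL N))
      ⊔ Submodule.span ℝ {harmVF N 0, harmVF N 1} = vfSub N := by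
  have hle : (LinearMap.range (gradL N) ⊔ LinearMap.range (delL N))
      ⊔ Submodule.span ℝ {harmVF N 0, harmVF N 1} ≤ vfSub N := by
    apply sup_le (sup_le ?_ ?_) ?_
    · rintro p ⟨f, rfl⟩; exact isVF_grad f
    · rintro p ⟨g, rfl⟩; exact isVF_del g
    · rw [Submodule.span_le]
      rintro p hp
      rcases hp with rfl | hp
      · exact isVF_harm 0
      · rw [Set.mem_singleton_iff] at hp; subst hp; exact isVF_harm 1
  have hGD : Module.finrank ℝ
      ↥(LinearMap.range (gradL N) ⊔ LinearMap.range (delL N))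
      = (N ^ 2 - 1) + (N ^ 2 - 1) := by
    have h := Submodule.finrank_sup_add_finrank_inf_eq
      (LinearMap.range (gradL N)) (LinearMap.range (delL N))
    rw [inf_bot_of_orth orth_GD, finrank_bot, finrank_rangeG, finrank_rangeD] at h
    omega
  have hS : Module.finrank ℝ
      ↥((LinearMap.range (gradL N) ⊔ LinearMap.range (delL N))
        ⊔ Submodule.span ℝ {harmVF N 0, harmVF N 1}) = 2 * N ^ 2 := by
    have h := Submodule.finrank_sup_add_finrank_inf_eq
      (LinearMap.range (gradL N) ⊔ LinearMap.range (delL N))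
      (Submodule.span ℝ {harmVF N 0, harmVF N 1})
    rw [inf_bot_of_orth orth_GDH, finrank_bot, hGD, finrank_H] at h
    have hN1 : 1 ≤ N ^ 2 := Nat.one_le_iff_ne_zero.mpr (by
      have := NeZero.ne N; positivity)
    omega
  exact Submodule.eq_of_le_of_finrank_le hle (by rw [hS, finrank_vfSub])

end HodgeAux7
/-- discrete Hodge decomposition on the two-dimensional discrete torus:
existence, orthogonality and uniqueness of the decomposition, and the dimensions of the
three subspaces. -/
theorem stmt_6 (N : ℕ) [NeZero N] (hN : 2 ≤ N) :
    (∀ φ : Torus N → Fin 4 → ℝ, IsVF φ →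
      ∃ (f : Torus N → ℝ) (ψ : Torus N × Bool → ℝ) (c₁ c₂ : ℝ),
        Is2Form ψ ∧
        φ = gradVF f + deltaVF ψ + c₁ • harmVF N 0 + c₂ • harmVF N 1 ∧
        vfInner (gradVF f) (deltaVF ψ) = 0 ∧
        vfInner (gradVF f) (c₁ • harmVF N 0 + c₂ • harmVF N 1) = 0 ∧
        vfInner (deltaVF ψ) (c₁ • harmVF N 0 + c₂ • harmVF N 1) = 0 ∧
        (∀ (f' : Torus N → ℝ) (ψ' : Torus N × Bool → ℝ) (c₁' c₂' : ℝ), Is2Form ψ' →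
          φ = gradVF f' + deltaVF ψ' + c₁' • harmVF N 0 + c₂' • harmVF N 1 →
          gradVF f' = gradVF f ∧ deltaVF ψ' = deltaVF ψ ∧ c₁' = c₁ ∧ c₂' = c₂))
    ∧ Module.finrank ℝ (Submodule.span ℝ (Set.range (gradVF (N := N)))) = N ^ 2 - 1
    ∧ Module.finrank ℝ (Submodule.span ℝ (deltaVF '' {ψ : Torus N × Bool → ℝ | Is2Form ψ}))
        = N ^ 2 - 1
    ∧ Module.finrank ℝ (Submodule.span ℝ {harmVF N 0, harmVF N 1}) = 2 := by
  refine ⟨?_, ?_, ?_, finrank_H⟩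
  · intro φ hφ
    have hmem : φ ∈ (LinearMap.range (gradL N) ⊔ LinearMap.range (delL N))
        ⊔ Submodule.span ℝ {harmVF N 0, harmVF N 1} := by
      rw [sup_eq_vfSub]; exact hφ
    obtain ⟨u, hu, r, hr, rfl⟩ := Submodule.mem_sup.mp hmem
    obtain ⟨p, hp, q, hq, rfl⟩ := Submodule.mem_sup.mp hu
    obtain ⟨f, rfl⟩ := hp
    obtain ⟨g, rfl⟩ := hq
    obtain ⟨c₁, c₂, rfl⟩ := Submodule.mem_span_pair.mp hr
    have hWmem : ∀ a b : ℝ, a • harmVF N 0 + b • harmVF N 1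
        ∈ Submodule.span ℝ {harmVF N 0, harmVF N 1} :=
      fun a b => Submodule.mem_span_pair.mpr ⟨a, b, rfl⟩
    refine ⟨f, psiOf g, c₁, c₂, is2Form_psiOf g, ?_, ?_, ?_, ?_, ?_⟩
    · rw [deltaVF_psiOf, show (gradL N) f = gradVF f from rfl,
        show (delL N) g = delFun g from rfl, ← add_assoc]
    · rw [deltaVF_psiOf]; exact orthGD f g
    · exact vfInner_H_right (orthGH0 f) (orthGH1 f) (hWmem c₁ c₂)
    · rw [deltaVF_psiOf]
      exact vfInner_H_right (orthDH0 g) (orthDH1 g) (hWmem c₁ c₂)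
    · intro f' ψ' c₁' c₂' hψ' heq
      set g' : Torus N → ℝ := fun w => ψ' (w, true) with hg'
      rw [deltaVF_eq_delFun hψ', show (gradL N) f = gradVF f from rfl,
        show (delL N) g = delFun g from rfl] at heq
      set U : Torus N → Fin 4 → ℝ := gradVF (f - f') with hU
      set V : Torus N → Fin 4 → ℝ := delFun (g - g') with hV
      set W : Torus N → Fin 4 → ℝ
        := (c₁ - c₁') • harmVF N 0 + (c₂ - c₂') • harmVF N 1 with hW
      have hWm : W ∈ Submodule.span ℝ {harmVF N 0, harmVF N 1} := hWmem _ _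
      have hsum : U + V + W = 0 := by
        funext x d
        have hpt := congrFun (congrFun heq x) d
        simp only [hU, hV, hW, gradVF, delFun, Pi.add_apply, Pi.sub_apply, Pi.smul_apply,
          smul_eq_mul, Pi.zero_apply] at hpt ⊢
        linarith
      have expand : ∀ z : Torus N → Fin 4 → ℝ,
          vfInner z (U + V + W) = vfInner z U + vfInner z V + vfInner z W := by
        intro z
        rw [vfInner_add_right (U + V) W z, vfInner_add_right U V z]
      have hzero : ∀ z : Torus N → Fin 4 → ℝ, vfInner z (U + V + W) = 0 := by
        intro z
        rw [hsum]
        exact map_zero (B N z)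
      have hUV : vfInner U V = 0 := orthGD (f - f') (g - g')
      have hUW : vfInner U W = 0 :=
        vfInner_H_right (orthGH0 (f - f')) (orthGH1 (f - f')) hWm
      have hVW : vfInner V W = 0 :=
        vfInner_H_right (orthDH0 (g - g')) (orthDH1 (g - g')) hWm
      have hU0 : U = 0 := by
        apply vfInner_self_eq_zero
        have := (expand U).symm
        rw [hzero U, hUV, hUW] at this
        linarith
      have hV0 : V = 0 := by
        apply vfInner_self_eq_zero
        have := (expand V).symm
        rw [hzero V, hVW, vfInner_comm V U, hUV] at this
        linarith
      have hW0 : W = 0 := by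
        apply vfInner_self_eq_zero
        have := (expand W).symm
        rw [hzero W, vfInner_comm W U, hUW, vfInner_comm W V, hVW] at this
        linarith
      refine ⟨?_, ?_, ?_, ?_⟩
      · funext x d
        have := congrFun (congrFun hU0 x) d
        simp only [hU, gradVF, Pi.sub_apply, Pi.zero_apply] at this
        simp only [gradVF]
        linarith
      · rw [deltaVF_eq_delFun hψ', deltaVF_psiOf]
        funext x d
        have := congrFun (congrFun hV0 x) d
        simp only [hV, delFun, Pi.sub_apply, Pi.zero_apply] at this
        simp only [delFun]
        linarith
      · have := congrFun (congrFun hW0 0) 0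
        simp only [hW, Pi.add_apply, Pi.smul_apply, smul_eq_mul, harm_0_0, harm_1_0,
          Pi.zero_apply] at this
        linarith
      · have := congrFun (congrFun hW0 0) 1
        simp only [hW, Pi.add_apply, Pi.smul_apply, smul_eq_mul, harm_0_1, harm_1_1,
          Pi.zero_apply] at this
        linarith
  · rw [show Set.range (gradVF (N := N))
        = (LinearMap.range (gradL N) : Set (Torus N → Fin 4 → ℝ)) from rfl,
      Submodule.span_eq, finrank_rangeG]
  · have himg : deltaVF '' {ψ : Torus N × Bool → ℝ | Is2Form ψ}
        = (LinearMap.range (delL N) : Set (Torus N → Fin 4 → ℝ)) := by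
      ext y
      simp only [Set.mem_image, Set.mem_setOf_eq, SetLike.mem_coe, LinearMap.mem_range]
      constructor
      · rintro ⟨ψ, hψ, rfl⟩
        exact ⟨fun w => ψ (w, true), (deltaVF_eq_delFun hψ).symm⟩
      · rintro ⟨g, rfl⟩
        exact ⟨psiOf g, is2Form_psiOf g, deltaVF_psiOf g⟩
    rw [himg, Submodule.span_eq, finrank_rangeD]
end

section
/- (Equivalence of the two generalized gradient conditions.) Fix an integer N ≥ 2 and, for i ∈ {1,2}, functions j_i : Σ_N × Λ_N → ℝ, written j_η(x, x+e^{(i)}) := j_i(η, x). The following are equivalent: (I) there exist n₀ ∈ ℕ, functions h_{i,n} : Σ_N → ℝ and functions p_{i,n} : Λ_N → ℝ with ∑_{z∈Λ_N} p_{i,n}(z) = 0 for all i,n, such that j_η(x, x+e^{(i)}) = ∑_{n=1}^{n₀} ∑_{y∈Λ_N} p_{i,n}(y−x) (τ_y h_{i,n})(η) for all η, x, i; (II) there exist functions h_{i,j} : Σ_N → ℝ (i,j ∈ {1,2}) such that j_η(x, x+e^{(i)}) = ∑_{j=1}^{2} [(τ_{x+e^{(j)}} h_{i,j})(η) − (τ_x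 h_{i,j})(η)] for all η, x, i. -/
open Finset

/-!
A mean-zero weight `p` on the torus is a sum of backward differences,
`p = ∑ₖ (qₖ(· - eₖ) - qₖ)`: in each direction this is the discrete fundamental theorem of calculus
on the cycle `ZMod N`, which closes up precisely because the total mass vanishes. Hence
`∑_y p(y - x) τ_y h = ∑ₖ (τ_{x+eₖ} Hₖ - τ_x Hₖ)` with `Hₖ = ∑_z qₖ(z) τ_z h`, giving (II) from (I).
Conversely a gradient `τ_{x+eₖ} h - τ_x h` is of the form (I) with the weight `δ_{eₖ} - δ_0`.
-/

theorem ZMod.sum_univ_eq_sum_range {N : ℕ} [NeZero N] {M : Type*} [AddCommMonoid M]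
    (f : ZMod N → M) : ∑ a, f a = ∑ k ∈ range N, f k := by
  refine sum_bij' (fun a _ => a.val) (fun k _ => (k : ZMod N)) (fun a _ => mem_range.2 a.val_lt)
    (fun _ _ => mem_univ _) (fun a _ => a.natCast_zmod_val) (fun k hk => ?_) (fun a _ => ?_)
  · exact ZMod.val_cast_of_lt (mem_range.1 hk)
  · rw [a.natCast_zmod_val]

/-- The potential is the negated partial sum `Q a = -∑_{0 < b ≤ a} f b`. -/
theorem ZMod.exists_potential_of_sum_eq_zero {N : ℕ} [NeZero N] {M : Type*} [AddCommGroup M]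
    (f : ZMod N → M) (hf : ∑ a, f a = 0) : ∃ Q : ZMod N → M, ∀ a, f a = Q (a - 1) - Q a := by
  refine ⟨fun a => -∑ k ∈ range a.val, f (k + 1 : ℕ), fun a => ?_⟩
  obtain ⟨n, hn, rfl⟩ : ∃ n < N, (n : ZMod N) = a := ⟨a.val, a.val_lt, a.natCast_zmod_val⟩
  cases n with
  | zero =>
    obtain ⟨M', rfl⟩ := Nat.exists_eq_succ_of_ne_zero (NeZero.ne N)
    rw [ZMod.sum_univ_eq_sum_range, sum_range_succ'] at hf
    simp only [Nat.cast_zero, zero_sub, ZMod.val_neg_one, ZMod.val_zero, range_zero, sum_empty,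
      neg_zero, sub_zero]
    exact (neg_eq_of_add_eq_zero_right hf).symm
  | succ m =>
    have hsub : ((m + 1 : ℕ) : ZMod N) - 1 = m := by push_cast; ring
    dsimp only
    rw [hsub, ZMod.val_cast_of_lt (by omega : m < N), ZMod.val_cast_of_lt hn, sum_range_succ]
    abel

/-- First remove the column sums `P a = ∑ b, p (a, b)` by a potential along `e²` within each
column, then realise `P`, which has mean zero, by a potential along `e¹` on the row `b = 0`. -/
theorem Torus.exists_potential_of_sum_eq_zero {N : ℕ} [NeZero N] {M : Type*} [AddCommGroup M]
    (p : Torus N → M) (hp : ∑ z, p z = 0) :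
    ∃ q : Fin 2 → Torus N → M, ∀ z, p z = ∑ i, (q i (z - ee N i) - q i z) := by
  set P : ZMod N → M := fun a => ∑ b, p (a, b) with hP
  obtain ⟨Q₁, hQ₁⟩ := ZMod.exists_potential_of_sum_eq_zero P (by rw [← hp, Fintype.sum_prod_type])
  choose Q₂ hQ₂ using fun a => ZMod.exists_potential_of_sum_eq_zero
    (fun b => p (a, b) - if b = 0 then P a else 0) (by simp [sum_sub_distrib, hP])
  refine ⟨![fun z => if z.2 = 0 then Q₁ z.1 else 0, fun z => Q₂ z.1 z.2], fun ⟨a, b⟩ => ?_⟩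
  have h₁ := hQ₁ a
  have h₂ := hQ₂ a b
  simp only [Fin.sum_univ_two, ee, Matrix.cons_val_zero, Matrix.cons_val_one, Prod.mk_sub_mk,
    sub_zero]
  by_cases hb : b = 0
  · simp only [hb, if_true] at h₂ ⊢
    rw [← h₁, ← h₂]
    abel
  · simp only [hb, if_false, sub_zero, sub_self, zero_add] at h₂ ⊢
    exact h₂

section WeightedTrf

variable {N : ℕ}

theorem trf_trf (a b : Torus N) (h : Config N → ℝ) : trf a (trf b h) = trf (a + b) h := by
  funext η
  show h (fun w => η (w - -b - -a)) = h (fun w => η (w - -(a + b)))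
  congr! 3
  abel

theorem trf_sum {ι : Type*} (s : Finset ι) (x : Torus N) (h : ι → Config N → ℝ) :
    trf x (∑ n ∈ s, h n) = ∑ n ∈ s, trf x (h n) := by
  funext η
  simp only [trf, Finset.sum_apply]

variable [NeZero N]

noncomputable def weightedTrf (q : Torus N → ℝ) (h : Config N → ℝ) (η : Config N) : ℝ :=
  ∑ z, q z * trf z h η

theorem trf_weightedTrf (x : Torus N) (q : Torus N → ℝ) (h : Config N → ℝ) :
    trf x (weightedTrf q h) = weightedTrf (fun z => q (z - x)) h := by
  funext η
  have hshift : ∀ z, trf z h (trc (-x) η) = trf (x + z) h η := fun z => by rw [← trf_trf]; rfl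
  show ∑ z, q z * trf z h (trc (-x) η) = _
  simp only [hshift]
  exact Fintype.sum_equiv (Equiv.addLeft x) _ _ fun z => by simp

theorem weightedTrf_sub (q q' : Torus N → ℝ) (h : Config N → ℝ) (η : Config N) :
    weightedTrf q h η - weightedTrf q' h η = weightedTrf (q - q') h η := by
  simp only [weightedTrf, ← sum_sub_distrib, ← sub_mul, Pi.sub_apply]

theorem sum_weightedTrf {ι : Type*} (s : Finset ι) (q : ι → Torus N → ℝ) (h : Config N → ℝ)
    (η : Config N) : ∑ i ∈ s, weightedTrf (q i) h η = weightedTrf (∑ i ∈ s, q i) h η := by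
  simp only [weightedTrf, Finset.sum_apply, sum_mul]
  exact sum_comm

end WeightedTrf

/-- `j i η x` stands for the current `j_η(x, x + e⁽ⁱ⁾)`. -/
theorem stmt_7_general (N : ℕ) [NeZero N] (j : Fin 2 → Config N → Torus N → ℝ) :
    (∃ (n₀ : ℕ) (h : Fin 2 → Fin n₀ → Config N → ℝ) (p : Fin 2 → Fin n₀ → Torus N → ℝ),
      (∀ (i : Fin 2) (n : Fin n₀), ∑ z : Torus N, p i n z = 0) ∧
      (∀ (i : Fin 2) (η : Config N) (x : Torus N),
        j i η x = ∑ n : Fin n₀, ∑ y : Torus N, p i n (y - x) * trf y (h i n) η))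
    ↔ (∃ h : Fin 2 → Fin 2 → Config N → ℝ,
      ∀ (i : Fin 2) (η : Config N) (x : Torus N),
        j i η x = ∑ jj : Fin 2, (trf (x + ee N jj) (h i jj) η - trf x (h i jj) η)) := by
  constructor
  · rintro ⟨n₀, h, p, hp, hj⟩
    choose q hq using fun i n => Torus.exists_potential_of_sum_eq_zero (p i n) (hp i n)
    refine ⟨fun i k => ∑ n, weightedTrf (q i n k) (h i n), fun i η x => ?_⟩
    simp only [trf_sum, trf_weightedTrf, Finset.sum_apply, ← sum_sub_distrib, weightedTrf_sub]
    rw [sum_comm, hj]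
    refine sum_congr rfl fun n _ => ?_
    rw [sum_weightedTrf]
    exact sum_congr rfl fun y _ => by simp [hq i n (y - x), sub_sub]
  · rintro ⟨h, hj⟩
    refine ⟨2, h, fun _ n z => (if z = ee N n then 1 else 0) - (if z = 0 then 1 else 0),
      fun _ _ => by simp [sum_sub_distrib], fun i η x => ?_⟩
    rw [hj]
    refine sum_congr rfl fun n _ => ?_
    simp [sub_mul, sum_sub_distrib, sub_eq_iff_eq_add']

/-- equivalence of the two generalized gradient conditions for a
translation-covariantly given current `j_η(x, x + e⁽ⁱ⁾) = j i η x`. -/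
theorem stmt_7 (N : ℕ) [NeZero N] (hN : 2 ≤ N) (j : Fin 2 → Config N → Torus N → ℝ) :
    (∃ (n₀ : ℕ) (h : Fin 2 → Fin n₀ → Config N → ℝ) (p : Fin 2 → Fin n₀ → Torus N → ℝ),
      (∀ (i : Fin 2) (n : Fin n₀), ∑ z : Torus N, p i n z = 0) ∧
      (∀ (i : Fin 2) (η : Config N) (x : Torus N),
        j i η x = ∑ n : Fin n₀, ∑ y : Torus N, p i n (y - x) * trf y (h i n) η))
    ↔ (∃ h : Fin 2 → Fin 2 → Config N → ℝ,
      ∀ (i : Fin 2) (η : Config N) (x : Torus N),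
        j i η x = ∑ jj : Fin 2, (trf (x + ee N jj) (h i jj) η - trf x (h i jj) η)) :=
  stmt_7_general N j
end

section
/- For every integer N ≥ 2, the instantaneous current of the model splits exactly into a gradient part and a circulation part: for every configuration η ∈ Σ_N and every directed edge (x,y) ∈ E_N, j_η(x,y) := c_{x,y}(η) − c_{y,x}(η) = [(τ_y h)(η) − (τ_x h)(η)] + [τ_{f⁺(x,y)} g(η) − τ_{f⁻(x,y)} g(η)], where h : Σ_N → ℝ is the local function h(η) = −η(0). -/
/-!
Writing `y = x + dvec d`, the faces of the reversed edge are those of `(x, y)` with their roles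
exchanged, so `c_{x,y} - c_{y,x} = η(x) - η(y) + (η(x) + η(y)) (g⁺ - g⁻)` with `g^± = τ_{f^±} g`.
The function `g` vanishes unless its face is in a checkerboard configuration, in which any two
adjacent corners differ; since `(x, y)` is an edge of both faces, `η(x) = η(y)` forces
`g⁺ = g⁻ = 0`, while otherwise `η(x) + η(y) = 1`.
-/


open Finset

section

variable {N : ℕ}

/-- In a unit square each corner of `{0, e¹ + e²}` is adjacent to each corner of `{e¹, e²}`. -/
def IsFaceEdge (w x y : Torus N) : Prop :=
  x - w ∈ ({(0, 0), (1, 1)} : Set (Torus N)) ∧ y - w ∈ ({(1, 0), (0, 1)} : Set (Torus N)) ∨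
    x - w ∈ ({(1, 0), (0, 1)} : Set (Torus N)) ∧ y - w ∈ ({(0, 0), (1, 1)} : Set (Torus N))

lemma trf_apply (w : Torus N) (F : Config N → ℝ) (η : Config N) :
    trf w F η = F (fun z => η (z + w)) := by
  unfold trf trc
  simp only [sub_neg_eq_add]

lemma trf_neg_bval_origin (w : Torus N) (η : Config N) :
    trf w (fun ζ => -bval (ζ (0, 0))) η = -bval (η w) := by
  simp only [trf_apply, Prod.mk_zero_zero, zero_add]

lemma trf_gfun_eq_zero_of_isFaceEdge (α : ℝ) {η : Config N} {w x y : Torus N}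
    (hxy : IsFaceEdge w x y) (h : η x = η y) : trf w (gfun α) η = 0 := by
  rw [trf_apply, gfun]
  simp only [IsFaceEdge, Set.mem_insert_iff, Set.mem_singleton_iff, sub_eq_iff_eq_add] at hxy
  rcases hxy with ⟨hx | hx, hy | hy⟩ | ⟨hx | hx, hy | hy⟩ <;> subst hx hy <;>
    split_ifs <;> simp_all

lemma isFaceEdge_fplus (x : Torus N) (d : Fin 4) :
    IsFaceEdge (fplus x d) x (x + dvec N d) := by
  fin_cases d <;> simp [IsFaceEdge, fplus, dvec, Prod.ext_iff]

lemma isFaceEdge_fminus (x : Torus N) (d : Fin 4) :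
    IsFaceEdge (fminus x d) x (x + dvec N d) := by
  fin_cases d <;> simp [IsFaceEdge, fminus, dvec, Prod.ext_iff]

lemma add_dvec_rev (x : Torus N) (d : Fin 4) : x + dvec N d + dvec N (rev d) = x := by
  fin_cases d <;> simp [dvec, rev, add_assoc]

lemma fplus_rev (x : Torus N) (d : Fin 4) :
    fplus (x + dvec N d) (rev d) = fminus x d := by
  fin_cases d <;> simp [fplus, fminus, dvec, rev, Prod.ext_iff, ← sub_eq_add_neg]

lemma fminus_rev (x : Torus N) (d : Fin 4) :
    fminus (x + dvec N d) (rev d) = fplus x d := by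
  fin_cases d <;> simp [fplus, fminus, dvec, rev, Prod.ext_iff, ← sub_eq_add_neg]

lemma rate_rev (α : ℝ) (η : Config N) (x : Torus N) (d : Fin 4) :
    rate α η (x + dvec N d) (rev d) =
      bval (η (x + dvec N d)) * (1 - bval (η x))
        + bval (η (x + dvec N d))
          * (trf (fminus x d) (gfun α) η - trf (fplus x d) (gfun α) η) := by
  rw [rate, add_dvec_rev, fplus_rev, fminus_rev]

end

lemma bval_current_split (b₁ b₂ : Bool) (G₁ G₂ : ℝ) (h : b₁ = b₂ → G₁ = G₂) :
    (bval b₁ * (1 - bval b₂) + bval b₁ * (G₁ - G₂))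
        - (bval b₂ * (1 - bval b₁) + bval b₂ * (G₂ - G₁))
      = (-bval b₂ - -bval b₁) + (G₁ - G₂) := by
  cases b₁ <;> cases b₂ <;> simp only [bval] at h ⊢ <;> grind

theorem stmt_10_general (N : ℕ) (α : ℝ)
    (η : Config N) (x : Torus N) (d : Fin 4) :
    rate α η x d - rate α η (x + dvec N d) (rev d)
      = (trf (x + dvec N d) (fun ζ => -bval (ζ (0, 0))) η
          - trf x (fun ζ => -bval (ζ (0, 0))) η)
        + (trf (fplus x d) (gfun α) η - trf (fminus x d) (gfun α) η) := by
  rw [rate_rev, rate, trf_neg_bval_origin, trf_neg_bval_origin]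
  refine bval_current_split _ _ _ _ fun h => ?_
  rw [trf_gfun_eq_zero_of_isFaceEdge α (isFaceEdge_fplus x d) h,
    trf_gfun_eq_zero_of_isFaceEdge α (isFaceEdge_fminus x d) h]

/-- exact splitting of the instantaneous current into a gradient part with
`h(η) = -η(0)` and a circulation part with the local function `g`. -/
theorem stmt_10 (N : ℕ) [NeZero N] (hN : 2 ≤ N) (α : ℝ) (hα : |α| < 1)
    (η : Config N) (x : Torus N) (d : Fin 4) :
    rate α η x d - rate α η (x + dvec N d) (rev d)
      = (trf (x + dvec N d) (fun ζ => -bval (ζ (0, 0))) η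
          - trf x (fun ζ => -bval (ζ (0, 0))) η)
        + (trf (fplus x d) (gfun α) η - trf (fminus x d) (gfun α) η) :=
  stmt_10_general N α η x d
end

section
/- For every integer N ≥ 2, every configuration η ∈ Σ_N and every antisymmetric map G : E_N → ℝ, the instantaneous current of the model satisfies the summation-by-parts identity (1/2) ∑_{(x,y)∈E_N} j_η(x,y) G(x,y) = ∑_{x∈Λ_N} η(x) ∇·G(x) + ∑_{𝔣∈𝓕_N} (τ_𝔣 g)(η) ∑_{(x,y)∈f^↺} G(x,y), where 𝓕_N is the set of unoriented elementary faces and f^↺ is the anticlockwise orientation of 𝔣 (regarded as the cyclic sequence of four directed edges around the face). -/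
open Finset

lemma shift_sum {N : ℕ} [NeZero N] (f : Torus N → ℝ) (v : Torus N) :
    ∑ x : Torus N, f (x + v) = ∑ x : Torus N, f x :=
  Equiv.sum_comp (Equiv.addRight v) f

lemma rev_sum (h : Fin 4 → ℝ) : ∑ d, h (rev d) = ∑ d, h d := by
  simp [Fin.sum_univ_four, rev]; ring

lemma dvec_rev {N : ℕ} (d : Fin 4) : dvec N (rev d) = -dvec N d := by
  fin_cases d <;> simp [dvec, rev, Prod.ext_iff]

def pvec (N : ℕ) : Fin 4 → Torus N := ![0, (1,0), (1,0)+(0,1), (0,1)]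
def qvec (N : ℕ) : Fin 4 → Torus N := ![(0,1), 0, (1,0), (1,0)+(0,1)]

lemma fplus_eq {N : ℕ} (x : Torus N) (d : Fin 4) : fplus x d = x - pvec N d := by
  fin_cases d <;> simp [fplus, pvec, sub_sub]

lemma fminus_eq {N : ℕ} (x : Torus N) (d : Fin 4) : fminus x d = x - qvec N d := by
  fin_cases d <;> simp [fminus, qvec, sub_sub]

lemma gkey {N : ℕ} (α : ℝ) (η : Config N) (w : Torus N) :
    trf w (gfun α) η * (bval (η w) + bval (η (w + (1,0)))) = trf w (gfun α) η ∧
    trf w (gfun α) η * (bval (η (w + (1,0))) + bval (η (w + (1,0) + (0,1)))) = trf w (gfun α) η ∧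
    trf w (gfun α) η * (bval (η (w + (1,0) + (0,1))) + bval (η (w + (0,1)))) = trf w (gfun α) η ∧
    trf w (gfun α) η * (bval (η (w + (0,1))) + bval (η w)) = trf w (gfun α) η := by
  have h0 : ((0,0) : Torus N) - -w = w := by
    show (0 : Torus N) - -w = w; abel
  have h1 : ((1,0) : Torus N) - -w = w + (1,0) := by abel
  have h2 : ((1,1) : Torus N) - -w = w + (1,0) + (0,1) := by
    have : ((1,1) : Torus N) = (1,0) + (0,1) := by simp [Prod.ext_iff]
    rw [this]; abel
  have h3 : ((0,1) : Torus N) - -w = w + (0,1) := by abel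
  simp only [trf, trc, gfun, h0, h1, h2, h3]
  split_ifs with c1 c2
  · obtain ⟨a,b,c,d⟩ := c1; rw [a,b,c,d]; norm_num [bval]
  · obtain ⟨a,b,c,d⟩ := c2; rw [a,b,c,d]; norm_num [bval]
  · norm_num

/-- summation by parts for the instantaneous current against an antisymmetric
test field `G`: a divergence term plus a discrete-curl term over the faces. -/
theorem stmt_13 (N : ℕ) [NeZero N] (hN : 2 ≤ N) (α : ℝ) (hα : |α| < 1)
    (η : Config N) (G : Torus N → Fin 4 → ℝ)
    (hG : ∀ (x : Torus N) (d : Fin 4), G (x + dvec N d) (rev d) = -G x d) :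
    (1 / 2) * ∑ x : Torus N, ∑ d : Fin 4,
        (rate α η x d - rate α η (x + dvec N d) (rev d)) * G x d
      = (∑ x : Torus N, bval (η x) * ∑ d : Fin 4, G x d)
        + ∑ w : Torus N, trf w (gfun α) η * faceCCW G w := by
  have hGrev : ∀ (x : Torus N) (d : Fin 4), G (x - dvec N d) d = -G x (rev d) := by
    intro x d
    have := hG (x - dvec N d) d
    rw [sub_add_cancel] at this
    linarith [this]
  -- general flip lemma
  have flip : ∀ F : Torus N → Fin 4 → ℝ,
      (∑ x : Torus N, ∑ d : Fin 4, F (x + dvec N d) (rev d) * G x d)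
        = -∑ x : Torus N, ∑ d : Fin 4, F x d * G x d := by
    intro F
    rw [Finset.sum_comm]
    have h1 : ∀ d : Fin 4, ∑ x : Torus N, F (x + dvec N d) (rev d) * G x d
        = ∑ x : Torus N, F x (rev d) * (-G x (rev d)) := by
      intro d
      rw [← shift_sum (fun x => F x (rev d) * (-G x (rev d))) (dvec N d)]
      refine Finset.sum_congr rfl fun x _ => ?_
      rw [← hGrev (x + dvec N d) d, add_sub_cancel_right]
    calc (∑ d : Fin 4, ∑ x : Torus N, F (x + dvec N d) (rev d) * G x d)
        = ∑ d : Fin 4, ∑ x : Torus N, F x (rev d) * (-G x (rev d)) :=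
          Finset.sum_congr rfl fun d _ => h1 d
      _ = -∑ d : Fin 4, ∑ x : Torus N, F x (rev d) * G x (rev d) := by
          rw [← Finset.sum_neg_distrib]
          exact Finset.sum_congr rfl fun d _ => by
            rw [← Finset.sum_neg_distrib]
            exact Finset.sum_congr rfl fun x _ => by ring
      _ = -∑ d : Fin 4, ∑ x : Torus N, F x d * G x d := by
          rw [rev_sum (fun d => ∑ x : Torus N, F x d * G x d)]
      _ = -∑ x : Torus N, ∑ d : Fin 4, F x d * G x d := by rw [Finset.sum_comm]
  -- step 1: remove the 1/2
  have step1 : (∑ x : Torus N, ∑ d : Fin 4,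
      (rate α η x d - rate α η (x + dvec N d) (rev d)) * G x d)
      = 2 * ∑ x : Torus N, ∑ d : Fin 4, rate α η x d * G x d := by
    have hf := flip (fun x d => rate α η x d)
    have : (∑ x : Torus N, ∑ d : Fin 4,
        (rate α η x d - rate α η (x + dvec N d) (rev d)) * G x d)
        = (∑ x : Torus N, ∑ d : Fin 4, rate α η x d * G x d)
          - ∑ x : Torus N, ∑ d : Fin 4, rate α η (x + dvec N d) (rev d) * G x d := by
      rw [← Finset.sum_sub_distrib]
      exact Finset.sum_congr rfl fun x _ => by
        rw [← Finset.sum_sub_distrib]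
        exact Finset.sum_congr rfl fun d _ => by ring
    rw [this, hf]; ring
  rw [step1]
  -- decompose rate sums
  set b : Torus N → ℝ := fun x => bval (η x) with hbdef
  set gw : Torus N → ℝ := fun w => trf w (gfun α) η with hgwdef
  have hA2 : (∑ x : Torus N, ∑ d : Fin 4, b x * b (x + dvec N d) * G x d) = 0 := by
    have key : (∑ x : Torus N, ∑ d : Fin 4, b x * b (x + dvec N d) * G x d)
        = ∑ x : Torus N, ∑ d : Fin 4,
            (fun y e => b y * b (y + dvec N e)) (x + dvec N d) (rev d) * G x d := by
      refine Finset.sum_congr rfl fun x _ => Finset.sum_congr rfl fun d _ => ?_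
      simp only []
      rw [dvec_rev, add_neg_cancel_right, mul_comm (b (x + dvec N d)) (b x)]
    have key2 : (∑ x : Torus N, ∑ d : Fin 4, b x * b (x + dvec N d) * G x d)
        = -(∑ x : Torus N, ∑ d : Fin 4, b x * b (x + dvec N d) * G x d) :=
      key.trans (flip (fun y e => b y * b (y + dvec N e)))
    linarith [key2]
  -- rewrite rate pointwise
  have hrate : ∀ (x : Torus N) (d : Fin 4), rate α η x d * G x d
      = b x * G x d - b x * b (x + dvec N d) * G x d
        + (b x * gw (fplus x d) * G x d - b x * gw (fminus x d) * G x d) := by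
    intro x d
    simp only [rate, hbdef, hgwdef]
    ring
  have split : (∑ x : Torus N, ∑ d : Fin 4, rate α η x d * G x d)
      = (∑ x : Torus N, ∑ d : Fin 4, b x * G x d)
        - (∑ x : Torus N, ∑ d : Fin 4, b x * b (x + dvec N d) * G x d)
        + ((∑ x : Torus N, ∑ d : Fin 4, b x * gw (fplus x d) * G x d)
          - (∑ x : Torus N, ∑ d : Fin 4, b x * gw (fminus x d) * G x d)) := by
    rw [← Finset.sum_sub_distrib, ← Finset.sum_sub_distrib, ← Finset.sum_add_distrib]
    refine Finset.sum_congr rfl fun x _ => ?_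
    rw [← Finset.sum_sub_distrib, ← Finset.sum_sub_distrib, ← Finset.sum_add_distrib]
    exact Finset.sum_congr rfl fun d _ => hrate x d
  -- the plus and minus face sums
  have hP : (∑ x : Torus N, ∑ d : Fin 4, b x * gw (fplus x d) * G x d)
      = ∑ x : Torus N, gw x * ∑ d : Fin 4, b (x + pvec N d) * G (x + pvec N d) d := by
    rw [Finset.sum_comm]
    have h1 : ∀ d : Fin 4, (∑ x : Torus N, b x * gw (fplus x d) * G x d)
        = ∑ x : Torus N, gw x * (b (x + pvec N d) * G (x + pvec N d) d) := by
      intro d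
      rw [← shift_sum (fun x => b x * gw (fplus x d) * G x d) (pvec N d)]
      refine Finset.sum_congr rfl fun x _ => ?_
      rw [fplus_eq, add_sub_cancel_right]
      ring
    calc (∑ d : Fin 4, ∑ x : Torus N, b x * gw (fplus x d) * G x d)
        = ∑ d : Fin 4, ∑ x : Torus N, gw x * (b (x + pvec N d) * G (x + pvec N d) d) :=
          Finset.sum_congr rfl fun d _ => h1 d
      _ = ∑ x : Torus N, ∑ d : Fin 4, gw x * (b (x + pvec N d) * G (x + pvec N d) d) :=
          Finset.sum_comm
      _ = ∑ x : Torus N, gw x * ∑ d : Fin 4, b (x + pvec N d) * G (x + pvec N d) d := by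
          exact Finset.sum_congr rfl fun x _ => (Finset.mul_sum _ _ _).symm
  have hM : (∑ x : Torus N, ∑ d : Fin 4, b x * gw (fminus x d) * G x d)
      = ∑ x : Torus N, gw x * ∑ d : Fin 4, b (x + qvec N d) * G (x + qvec N d) d := by
    rw [Finset.sum_comm]
    have h1 : ∀ d : Fin 4, (∑ x : Torus N, b x * gw (fminus x d) * G x d)
        = ∑ x : Torus N, gw x * (b (x + qvec N d) * G (x + qvec N d) d) := by
      intro d
      rw [← shift_sum (fun x => b x * gw (fminus x d) * G x d) (qvec N d)]
      refine Finset.sum_congr rfl fun x _ => ?_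
      rw [fminus_eq, add_sub_cancel_right]
      ring
    calc (∑ d : Fin 4, ∑ x : Torus N, b x * gw (fminus x d) * G x d)
        = ∑ d : Fin 4, ∑ x : Torus N, gw x * (b (x + qvec N d) * G (x + qvec N d) d) :=
          Finset.sum_congr rfl fun d _ => h1 d
      _ = ∑ x : Torus N, ∑ d : Fin 4, gw x * (b (x + qvec N d) * G (x + qvec N d) d) :=
          Finset.sum_comm
      _ = ∑ x : Torus N, gw x * ∑ d : Fin 4, b (x + qvec N d) * G (x + qvec N d) d := by
          exact Finset.sum_congr rfl fun x _ => (Finset.mul_sum _ _ _).symm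
  -- pointwise face identity
  have pointwise : ∀ x : Torus N,
      gw x * (∑ d : Fin 4, b (x + pvec N d) * G (x + pvec N d) d)
        - gw x * (∑ d : Fin 4, b (x + qvec N d) * G (x + qvec N d) d)
      = gw x * faceCCW G x := by
    intro x
    obtain ⟨k1, k2, k3, k4⟩ := gkey α η x
    have hm1 : ((-1, 0) : Torus N) = -((1, 0) : Torus N) := by simp [Prod.ext_iff]
    have hm2 : ((0, -1) : Torus N) = -((0, 1) : Torus N) := by simp [Prod.ext_iff]
    have e0 : G (x + (0, 1)) 0 = -G (x + (1, 0) + (0, 1)) 2 := by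
      have h := hG (x + (0, 1)) 0
      have hp : x + (0, 1) + dvec N 0 = x + (1, 0) + (0, 1) := by
        show x + (0, 1) + (1, 0) = x + (1, 0) + (0, 1); abel
      rw [hp] at h
      have hr : rev 0 = 2 := rfl
      rw [hr] at h
      linarith
    have e1 : G x 1 = -G (x + (0, 1)) 3 := by
      have h := hG x 1
      have hp : x + dvec N 1 = x + (0, 1) := rfl
      rw [hp] at h
      have hr : rev 1 = 3 := rfl
      rw [hr] at h
      linarith
    have e2 : G (x + (1, 0)) 2 = -G x 0 := by
      have h := hG (x + (1, 0)) 2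
      have hp : x + (1, 0) + dvec N 2 = x := by
        show x + (1, 0) + (-1, 0) = x; rw [hm1]; abel
      rw [hp] at h
      have hr : rev 2 = 0 := rfl
      rw [hr] at h
      linarith
    have e3 : G (x + (1, 0) + (0, 1)) 3 = -G (x + (1, 0)) 1 := by
      have h := hG (x + (1, 0) + (0, 1)) 3
      have hp : x + (1, 0) + (0, 1) + dvec N 3 = x + (1, 0) := by
        show x + (1, 0) + (0, 1) + (0, -1) = x + (1, 0); rw [hm2]; abel
      rw [hp] at h
      have hr : rev 3 = 1 := rfl
      rw [hr] at h
      linarith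
    have hass : x + ((1, 0) + (0, 1)) = x + (1, 0) + (0, 1) := (add_assoc _ _ _).symm
    simp only [Fin.sum_univ_four, pvec, qvec, Matrix.cons_val_zero, Matrix.cons_val_one,
      Matrix.head_cons, Matrix.cons_val_two, Matrix.tail_cons, Matrix.cons_val_three,
      add_zero, faceCCW, hbdef, hgwdef, hass]
    rw [e0, e1, e2, e3]
    linear_combination (G x 0) * k1 + (G (x + (1, 0)) 1) * k2
      + (G (x + (1, 0) + (0, 1)) 2) * k3 + (G (x + (0, 1)) 3) * k4
  -- assemble
  have hA1 : (∑ x : Torus N, ∑ d : Fin 4, b x * G x d)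
      = ∑ x : Torus N, b x * ∑ d : Fin 4, G x d :=
    Finset.sum_congr rfl fun x _ => (Finset.mul_sum _ _ _).symm
  rw [split, hA2, hA1, hP, hM, ← Finset.sum_sub_distrib,
    Finset.sum_congr rfl fun x _ => pointwise x]
  ring
end

section
/- (Functional Hodge decomposition of generalized gradient currents.) Fix an integer N ≥ 2 and let j : Σ_N × E_N → ℝ, written j_η(x,y), satisfy: (i) antisymmetry, j_η(x,y) = −j_η(y,x); (ii) translation covariance, j_{τ_z η}(x+z, y+z) = j_η(x,y) for all z ∈ Λ_N; (iii) the generalized gradient condition: there exist functions h_{i,j} : Σ_N → ℝ (i,j ∈ {1,2}) such that j_η(x, x+e^{(i)}) = ∑_{j=1}^{2} [(τ_{x+e^{(j)}} h_{i,j})(η) − (τ_x h_{i,j})(η)] for all η and x. Then there exist functions h, g : Σ_N → ℝ such that for all η ∈ Σ_N and all (x,y) ∈ E_N, j_η(x,y) = [(τ_y h)(η) − (τ_x h)(η)] + [τ_{f⁺(x,y)} g(η) − τ_{f⁻(x,y)} g(η)]. -/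
open Finset

set_option linter.unusedSectionVars false


namespace S19
open RealInnerProductSpace

section abstractsolve
variable {E : Type*} [NormedAddCommGroup E] [InnerProductSpace ℝ E] [FiniteDimensional ℝ E]

lemma solve (L : E →ₗ[ℝ] E) (hsym : ∀ f g : E, ⟪L f, g⟫ = ⟪f, L g⟫) (c : E)
    (hc : ∀ f : E, L f = 0 → ⟪c, f⟫ = 0) : ∃ g, L g = c := by
  obtain ⟨y, hy, z, hz, hdec⟩ := (LinearMap.range L).exists_add_mem_mem_orthogonal c
  obtain ⟨g, rfl⟩ := hy
  have hLz : L z = 0 := by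
    have h1 : ⟪L z, L z⟫ = 0 := by
      rw [hsym, real_inner_comm]
      exact ((Submodule.mem_orthogonal _ _).1 hz) _ (LinearMap.mem_range_self _ _)
    exact inner_self_eq_zero.1 h1
  have hz0 : z = 0 := by
    have h2 : ⟪L g + z, z⟫ = (0:ℝ) := hdec ▸ hc z hLz
    have h3 : ⟪L g, z⟫ = (0:ℝ) :=
      ((Submodule.mem_orthogonal _ _).1 hz) _ (LinearMap.mem_range_self _ _)
    have h4 : ⟪z, z⟫ = (0:ℝ) := by rw [inner_add_left, h3, zero_add] at h2; exact h2
    exact inner_self_eq_zero.1 h4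
  exact ⟨g, by rw [hdec, hz0, add_zero]⟩

end abstractsolve

variable {N : ℕ} [NeZero N]

lemma trc_trc (a b : Torus N) (η : Config N) : trc a (trc b η) = trc (a + b) η := by
  funext w; simp [trc, sub_sub]

@[simp] lemma trc_zero (η : Config N) : trc (0 : Torus N) η = η := by
  funext w; simp [trc]

@[simp] lemma trc_cancel (a : Torus N) (η : Config N) : trc (-a) (trc a η) = η := by
  rw [trc_trc, neg_add_cancel, trc_zero]

@[simp] lemma trc_cancel' (a : Torus N) (η : Config N) : trc a (trc (-a) η) = η := by
  rw [trc_trc, add_neg_cancel, trc_zero]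

lemma trc_swap (a b : Torus N) (η : Config N) : trc a (trc b η) = trc b (trc a η) := by
  rw [trc_trc, trc_trc, add_comm]

lemma neg_e1 : ((-1, 0) : Torus N) = -((1, 0) : Torus N) := by simp [Prod.ext_iff]

lemma neg_e2 : ((0, -1) : Torus N) = -((0, 1) : Torus N) := by simp [Prod.ext_iff]

def trcE (a : Torus N) : Config N ≃ Config N where
  toFun := trc a
  invFun := trc (-a)
  left_inv η := by simp
  right_inv η := by simp

lemma sum_shift (a : Torus N) (F : Config N → ℝ) :
    ∑ η : Config N, F (trc a η) = ∑ η : Config N, F η :=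
  Fintype.sum_equiv (trcE a) _ _ (fun _ => rfl)

lemma shift_mul (a : Torus N) (f g : Config N → ℝ) :
    ∑ η : Config N, f (trc a η) * g η = ∑ η : Config N, f η * g (trc (-a) η) := by
  rw [← sum_shift a (fun η => f η * g (trc (-a) η))]
  refine Finset.sum_congr rfl fun η _ => ?_
  simp [trc_trc]

lemma shift_mul' (a : Torus N) (f g : Config N → ℝ) :
    ∑ η : Config N, f (trc (-a) η) * g η = ∑ η : Config N, f η * g (trc a η) := by
  have h := shift_mul (-a) f g
  rwa [neg_neg] at h

abbrev ES (N : ℕ) := EuclideanSpace ℝ (Config N)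

lemma inner_def (f g : ES N) : ⟪f, g⟫ = ∑ η : Config N, f η * g η := by
  simp [PiLp.inner_apply, RCLike.inner_apply, starRingEnd_apply, mul_comm]

noncomputable def Lap (N : ℕ) [NeZero N] : ES N →ₗ[ℝ] ES N where
  toFun f := WithLp.toLp 2 (fun η => 4 * f η - f (trc ((1,0) : Torus N) η) - f (trc (-((1,0) : Torus N)) η)
      - f (trc ((0,1) : Torus N) η) - f (trc (-((0,1) : Torus N)) η))
  map_add' f g := by ext η; simp only [PiLp.add_apply, WithLp.ofLp_toLp]; ring
  map_smul' c f := by ext η; simp only [PiLp.smul_apply, smul_eq_mul, WithLp.ofLp_toLp, RingHom.id_apply]; ring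

lemma lap_apply (f : ES N) (η : Config N) :
    Lap N f η = 4 * f η - f (trc ((1,0) : Torus N) η) - f (trc (-((1,0) : Torus N)) η)
      - f (trc ((0,1) : Torus N) η) - f (trc (-((0,1) : Torus N)) η) := rfl

lemma lap_symm (f g : ES N) : ⟪Lap N f, g⟫ = ⟪f, Lap N g⟫ := by
  rw [inner_def, inner_def]
  simp only [lap_apply, sub_mul, mul_sub, Finset.sum_sub_distrib]
  rw [shift_mul ((1,0) : Torus N) f g, shift_mul' ((1,0) : Torus N) f g,
    shift_mul ((0,1) : Torus N) f g, shift_mul' ((0,1) : Torus N) f g]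
  rw [show (∑ x : Config N, f x * (4 * g x)) = ∑ x : Config N, 4 * f x * g x from
    Finset.sum_congr rfl fun x _ => by ring]
  ring

lemma grad_orth (a : Torus N) (u f : Config N → ℝ) (hf : ∀ η, f (trc (-a) η) = f η) :
    ∑ η : Config N, (u (trc a η) - u η) * f η = 0 := by
  simp only [sub_mul, Finset.sum_sub_distrib]
  rw [shift_mul a u f]
  simp [hf]

lemma grad_orth' (a : Torus N) (u f : Config N → ℝ) (hf : ∀ η, f (trc a η) = f η) :
    ∑ η : Config N, (u (trc (-a) η) - u η) * f η = 0 :=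
  grad_orth (-a) u f (fun η => by rw [neg_neg]; exact hf η)

lemma flip_dir (a : Torus N) (f : Config N → ℝ) (hf : ∀ η, f (trc a η) = f η) :
    ∀ η, f (trc (-a) η) = f η := by
  intro η
  have h := hf (trc (-a) η)
  rw [trc_cancel'] at h
  exact h.symm

lemma ker_lap (f : ES N) (hf : Lap N f = 0) :
    (∀ η, f (trc ((1,0) : Torus N) η) = f η) ∧ (∀ η, f (trc ((0,1) : Torus N) η) = f η) := by
  have h0 : ⟪f, Lap N f⟫ = (0 : ℝ) := by rw [hf, inner_zero_right]
  rw [inner_def] at h0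
  set a : Torus N := ((1,0) : Torus N)
  set b : Torus N := ((0,1) : Torus N)
  have key : ∑ η : Config N, ((f (trc a η) - f η)^2 + (f (trc b η) - f η)^2) = 0 := by
    have expand : ∑ η : Config N, ((f (trc a η) - f η)^2 + (f (trc b η) - f η)^2)
        = (∑ η : Config N, f η * Lap N f η)
          + (∑ η : Config N, (f (trc a η)^2 - f η ^2))
          + (∑ η : Config N, (f (trc b η)^2 - f η ^2))
          + (∑ η : Config N, (f η * f (trc (-a) η) - f η * f (trc a η)))
          + (∑ η : Config N, (f η * f (trc (-b) η) - f η * f (trc b η))) := by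
      rw [← Finset.sum_add_distrib, ← Finset.sum_add_distrib, ← Finset.sum_add_distrib,
        ← Finset.sum_add_distrib]
      refine Finset.sum_congr rfl fun η _ => ?_
      simp only [lap_apply]
      ring
    have z1 : ∑ η : Config N, (f (trc a η)^2 - f η ^2) = 0 := by
      rw [Finset.sum_sub_distrib, sum_shift a (fun η => f η ^ 2), sub_self]
    have z2 : ∑ η : Config N, (f (trc b η)^2 - f η ^2) = 0 := by
      rw [Finset.sum_sub_distrib, sum_shift b (fun η => f η ^ 2), sub_self]
    have z3 : ∑ η : Config N, (f η * f (trc (-a) η) - f η * f (trc a η)) = 0 := by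
      rw [Finset.sum_sub_distrib, ← shift_mul a f f]
      exact sub_eq_zero.2 (Finset.sum_congr rfl fun η _ => mul_comm _ _)
    have z4 : ∑ η : Config N, (f η * f (trc (-b) η) - f η * f (trc b η)) = 0 := by
      rw [Finset.sum_sub_distrib, ← shift_mul b f f]
      exact sub_eq_zero.2 (Finset.sum_congr rfl fun η _ => mul_comm _ _)
    rw [expand, h0, z1, z2, z3, z4]; ring
  have hpt : ∀ η : Config N, ((f (trc a η) - f η)^2 + (f (trc b η) - f η)^2) = 0 := by
    intro η
    have hnn : ∀ η' ∈ Finset.univ (α := Config N),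
        0 ≤ (f (trc a η') - f η')^2 + (f (trc b η') - f η')^2 :=
      fun η' _ => add_nonneg (sq_nonneg _) (sq_nonneg _)
    exact (Finset.sum_eq_zero_iff_of_nonneg hnn).1 key η (Finset.mem_univ η)
  constructor <;> intro η <;> have := hpt η
  · nlinarith [sq_nonneg (f (trc a η) - f η), sq_nonneg (f (trc b η) - f η)]
  · nlinarith [sq_nonneg (f (trc a η) - f η), sq_nonneg (f (trc b η) - f η)]

end S19

open S19 RealInnerProductSpace

set_option maxHeartbeats 1000000

/-- functional Hodge decomposition of a translation-covariant antisymmetric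
current satisfying the generalized gradient condition: it splits into a gradient part and a
circulation part. -/
theorem stmt_19 (N : ℕ) [NeZero N] (hN : 2 ≤ N) (j : Config N → Torus N → Fin 4 → ℝ)
    (hanti : ∀ (η : Config N) (x : Torus N) (d : Fin 4),
      j η (x + dvec N d) (rev d) = -j η x d)
    (hcov : ∀ (z : Torus N) (η : Config N) (x : Torus N) (d : Fin 4),
      j (trc z η) (x + z) d = j η x d)
    (hgrad : ∃ h : Fin 2 → Fin 2 → Config N → ℝ,
      ∀ (η : Config N) (x : Torus N) (i : Fin 2),
        j η x (Fin.castLE (by omega) i)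
          = ∑ jj : Fin 2, (trf (x + ee N jj) (h i jj) η - trf x (h i jj) η)) :
    ∃ hh gg : Config N → ℝ, ∀ (η : Config N) (x : Torus N) (d : Fin 4),
      j η x d = (trf (x + dvec N d) hh η - trf x hh η)
        + (trf (fplus x d) gg η - trf (fminus x d) gg η) := by
  classical
  obtain ⟨h, hg⟩ := hgrad
  -- translation to the origin
  have hx : ∀ (η : Config N) (x : Torus N) (d : Fin 4), j η x d = j (trc (-x) η) 0 d := by
    intro η x d
    have h1 := hcov x (trc (-x) η) 0 d
    rw [trc_cancel', zero_add] at h1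
    exact h1
  -- gradient identities at origin
  have hA : ∀ η : Config N, j η 0 0
      = (h 0 0 (trc (-((1,0) : Torus N)) η) - h 0 0 η)
        + (h 0 1 (trc (-((0,1) : Torus N)) η) - h 0 1 η) := by
    intro η
    have h1 : j η 0 0 = ∑ jj : Fin 2,
        (trf ((0 : Torus N) + ee N jj) (h 0 jj) η - trf 0 (h 0 jj) η) := hg η 0 0
    rw [h1, Fin.sum_univ_two]
    simp [trf, ee]
  have hB : ∀ η : Config N, j η 0 1
      = (h 1 0 (trc (-((1,0) : Torus N)) η) - h 1 0 η)
        + (h 1 1 (trc (-((0,1) : Torus N)) η) - h 1 1 η) := by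
    intro η
    have h1 : j η 0 1 = ∑ jj : Fin 2,
        (trf ((0 : Torus N) + ee N jj) (h 1 jj) η - trf 0 (h 1 jj) η) := hg η 0 1
    rw [h1, Fin.sum_univ_two]
    simp [trf, ee]
  -- Step 1: solve for the circulation part gg
  obtain ⟨gg0, hgg0⟩ := S19.solve (S19.Lap N) (fun f g => S19.lap_symm f g)
    (WithLp.toLp 2 (fun η => (j (trc (-((1,0) : Torus N)) η) 0 1 - j η 0 1)
      - (j (trc (-((0,1) : Torus N)) η) 0 0 - j η 0 0)))
    (by
      intro f hf
      obtain ⟨hf1, hf2⟩ := S19.ker_lap f hf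
      rw [S19.inner_def]
      show ∑ η : Config N, ((j (trc (-((1,0) : Torus N)) η) 0 1 - j η 0 1)
        - (j (trc (-((0,1) : Torus N)) η) 0 0 - j η 0 0)) * f η = 0
      have o1 : ∑ η : Config N, (j (trc (-((1,0) : Torus N)) η) 0 1 - j η 0 1) * f η = 0 :=
        S19.grad_orth' ((1,0) : Torus N) (fun η => j η 0 1) f hf1
      have o2 : ∑ η : Config N, (j (trc (-((0,1) : Torus N)) η) 0 0 - j η 0 0) * f η = 0 :=
        S19.grad_orth' ((0,1) : Torus N) (fun η => j η 0 0) f hf2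
      have split : ∑ η : Config N, ((j (trc (-((1,0) : Torus N)) η) 0 1 - j η 0 1)
            - (j (trc (-((0,1) : Torus N)) η) 0 0 - j η 0 0)) * f η
          = (∑ η : Config N, (j (trc (-((1,0) : Torus N)) η) 0 1 - j η 0 1) * f η)
            - ∑ η : Config N, (j (trc (-((0,1) : Torus N)) η) 0 0 - j η 0 0) * f η := by
        rw [← Finset.sum_sub_distrib]
        exact Finset.sum_congr rfl fun η _ => by ring
      rw [split, o1, o2, sub_zero])
  set gg : Config N → ℝ := fun η => gg0 η with hggdef
  have hggp : ∀ η : Config N,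
      4 * gg η - gg (trc ((1,0) : Torus N) η) - gg (trc (-((1,0) : Torus N)) η)
        - gg (trc ((0,1) : Torus N) η) - gg (trc (-((0,1) : Torus N)) η)
      = (j (trc (-((1,0) : Torus N)) η) 0 1 - j η 0 1)
        - (j (trc (-((0,1) : Torus N)) η) 0 0 - j η 0 0) := by
    intro η
    have h1 : S19.Lap N gg0 η
        = (j (trc (-((1,0) : Torus N)) η) 0 1 - j η 0 1)
          - (j (trc (-((0,1) : Torus N)) η) 0 0 - j η 0 0) := by rw [hgg0]
    rw [S19.lap_apply] at h1
    exact h1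
  -- corrected currents
  set A' : Config N → ℝ :=
    fun η => j η 0 0 - gg η + gg (trc ((0,1) : Torus N) η) with hA'def
  set B' : Config N → ℝ :=
    fun η => j η 0 1 - gg (trc ((1,0) : Torus N) η) + gg η with hB'def
  have curl : ∀ η : Config N,
      B' (trc (-((1,0) : Torus N)) η) - B' η = A' (trc (-((0,1) : Torus N)) η) - A' η := by
    intro η
    have hp := hggp η
    simp only [hA'def, hB'def, S19.trc_cancel, S19.trc_cancel']
    linarith
  -- Step 2: solve for the gradient part hh
  obtain ⟨hh0, hhh0⟩ := S19.solve (S19.Lap N) (fun f g => S19.lap_symm f g)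
    (WithLp.toLp 2 (fun η => (A' (trc ((1,0) : Torus N) η) - A' η) + (B' (trc ((0,1) : Torus N) η) - B' η)))
    (by
      intro f hf
      obtain ⟨hf1, hf2⟩ := S19.ker_lap f hf
      rw [S19.inner_def]
      show ∑ η : Config N, ((A' (trc ((1,0) : Torus N) η) - A' η)
        + (B' (trc ((0,1) : Torus N) η) - B' η)) * f η = 0
      have hf1' := S19.flip_dir ((1,0) : Torus N) f hf1
      have hf2' := S19.flip_dir ((0,1) : Torus N) f hf2
      have o1 : ∑ η : Config N, (A' (trc ((1,0) : Torus N) η) - A' η) * f η = 0 := by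
        have := S19.grad_orth' (-((1,0) : Torus N)) A' f hf1'
        rwa [neg_neg] at this
      have o2 : ∑ η : Config N, (B' (trc ((0,1) : Torus N) η) - B' η) * f η = 0 := by
        have := S19.grad_orth' (-((0,1) : Torus N)) B' f hf2'
        rwa [neg_neg] at this
      have split : ∑ η : Config N, ((A' (trc ((1,0) : Torus N) η) - A' η)
            + (B' (trc ((0,1) : Torus N) η) - B' η)) * f η
          = (∑ η : Config N, (A' (trc ((1,0) : Torus N) η) - A' η) * f η)
            + ∑ η : Config N, (B' (trc ((0,1) : Torus N) η) - B' η) * f η := by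
        rw [← Finset.sum_add_distrib]
        exact Finset.sum_congr rfl fun η _ => by ring
      rw [split, o1, o2, add_zero])
  set hh : Config N → ℝ := fun η => hh0 η with hhdef
  have hhhp : ∀ η : Config N,
      4 * hh η - hh (trc ((1,0) : Torus N) η) - hh (trc (-((1,0) : Torus N)) η)
        - hh (trc ((0,1) : Torus N) η) - hh (trc (-((0,1) : Torus N)) η)
      = (A' (trc ((1,0) : Torus N) η) - A' η) + (B' (trc ((0,1) : Torus N) η) - B' η) := by
    intro η
    have h1 : S19.Lap N hh0 η
        = (A' (trc ((1,0) : Torus N) η) - A' η) + (B' (trc ((0,1) : Torus N) η) - B' η) := by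
      rw [hhh0]
    rw [S19.lap_apply] at h1
    exact h1
  -- the discrepancies
  set u : Config N → ℝ := fun η => (hh (trc (-((1,0) : Torus N)) η) - hh η) - A' η with hudef
  set v : Config N → ℝ := fun η => (hh (trc (-((0,1) : Torus N)) η) - hh η) - B' η with hvdef
  have factI : ∀ η : Config N,
      (u (trc ((1,0) : Torus N) η) - u η) + (v (trc ((0,1) : Torus N) η) - v η) = 0 := by
    intro η
    have hp := hhhp η
    simp only [hudef, hvdef, S19.trc_cancel, S19.trc_cancel']
    linarith
  have factII : ∀ η : Config N,
      u (trc (-((0,1) : Torus N)) η) - u η = v (trc (-((1,0) : Torus N)) η) - v η := by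
    intro η
    have hc := curl η
    simp only [hudef, hvdef]
    rw [S19.trc_swap (-((1,0) : Torus N)) (-((0,1) : Torus N)) η]
    linarith
  -- u and v are harmonic
  have lapu : ∀ η : Config N, S19.Lap N (WithLp.toLp 2 u) η = 0 := by
    intro η
    have F1 := factI η
    have F2 := factI (trc (-((1,0) : Torus N)) η)
    have F3 := factII η
    have F4 := factII (trc ((0,1) : Torus N) η)
    rw [S19.trc_cancel'] at F2
    rw [S19.trc_cancel] at F4
    rw [S19.trc_swap ((0,1) : Torus N) (-((1,0) : Torus N)) η] at F2
    rw [S19.lap_apply]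
    simp only [WithLp.ofLp_toLp]
    linarith
  have lapv : ∀ η : Config N, S19.Lap N (WithLp.toLp 2 v) η = 0 := by
    intro η
    have G1 := factI η
    have G2 := factI (trc (-((0,1) : Torus N)) η)
    have G3 := factII η
    have G4 := factII (trc ((1,0) : Torus N) η)
    rw [S19.trc_cancel'] at G2
    rw [S19.trc_cancel] at G4
    rw [S19.trc_swap ((1,0) : Torus N) (-((0,1) : Torus N)) η] at G2
    rw [S19.lap_apply]
    simp only [WithLp.ofLp_toLp]
    linarith
  -- orthogonality of u, v to harmonic functions
  have orth_u : ∀ f : S19.ES N, S19.Lap N f = 0 → ∑ η : Config N, u η * f η = 0 := by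
    intro f hf
    obtain ⟨hf1, hf2⟩ := S19.ker_lap f hf
    have o1 : ∑ η : Config N,
        ((hh (trc (-((1,0) : Torus N)) η) - h 0 0 (trc (-((1,0) : Torus N)) η))
          - (hh η - h 0 0 η)) * f η = 0 :=
      S19.grad_orth' ((1,0) : Torus N) (fun η => hh η - h 0 0 η) f hf1
    have o2 : ∑ η : Config N,
        ((h 0 1 (trc (-((0,1) : Torus N)) η)
            - gg (trc ((0,1) : Torus N) (trc (-((0,1) : Torus N)) η)))
          - (h 0 1 η - gg (trc ((0,1) : Torus N) η))) * f η = 0 :=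
      S19.grad_orth' ((0,1) : Torus N) (fun η => h 0 1 η - gg (trc ((0,1) : Torus N) η)) f hf2
    have split : ∑ η : Config N, u η * f η
        = (∑ η : Config N,
            ((hh (trc (-((1,0) : Torus N)) η) - h 0 0 (trc (-((1,0) : Torus N)) η))
              - (hh η - h 0 0 η)) * f η)
          - ∑ η : Config N,
            ((h 0 1 (trc (-((0,1) : Torus N)) η)
                - gg (trc ((0,1) : Torus N) (trc (-((0,1) : Torus N)) η)))
              - (h 0 1 η - gg (trc ((0,1) : Torus N) η))) * f η := by
      rw [← Finset.sum_sub_distrib]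
      refine Finset.sum_congr rfl fun η _ => ?_
      simp only [hudef, hA'def, S19.trc_cancel']
      rw [hA η]
      ring
    rw [split, o1, o2, sub_zero]
  have orth_v : ∀ f : S19.ES N, S19.Lap N f = 0 → ∑ η : Config N, v η * f η = 0 := by
    intro f hf
    obtain ⟨hf1, hf2⟩ := S19.ker_lap f hf
    have o1 : ∑ η : Config N,
        ((hh (trc (-((0,1) : Torus N)) η) - h 1 1 (trc (-((0,1) : Torus N)) η))
          - (hh η - h 1 1 η)) * f η = 0 :=
      S19.grad_orth' ((0,1) : Torus N) (fun η => hh η - h 1 1 η) f hf2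
    have o2 : ∑ η : Config N,
        ((h 1 0 (trc (-((1,0) : Torus N)) η)
            + gg (trc ((1,0) : Torus N) (trc (-((1,0) : Torus N)) η)))
          - (h 1 0 η + gg (trc ((1,0) : Torus N) η))) * f η = 0 :=
      S19.grad_orth' ((1,0) : Torus N) (fun η => h 1 0 η + gg (trc ((1,0) : Torus N) η)) f hf1
    have split : ∑ η : Config N, v η * f η
        = (∑ η : Config N,
            ((hh (trc (-((0,1) : Torus N)) η) - h 1 1 (trc (-((0,1) : Torus N)) η))
              - (hh η - h 1 1 η)) * f η)
          - ∑ η : Config N,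
            ((h 1 0 (trc (-((1,0) : Torus N)) η)
                + gg (trc ((1,0) : Torus N) (trc (-((1,0) : Torus N)) η)))
              - (h 1 0 η + gg (trc ((1,0) : Torus N) η))) * f η := by
      rw [← Finset.sum_sub_distrib]
      refine Finset.sum_congr rfl fun η _ => ?_
      simp only [hvdef, hB'def, S19.trc_cancel']
      rw [hB η]
      ring
    rw [split, o1, o2, sub_zero]
  -- u = 0 and v = 0
  have lapu0 : S19.Lap N (WithLp.toLp 2 u) = 0 := by
    ext η
    simpa using lapu η
  have lapv0 : S19.Lap N (WithLp.toLp 2 v) = 0 := by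
    ext η
    simpa using lapv η
  have uzero : ∀ η : Config N, u η = 0 := by
    have h00 : ∑ η : Config N, u η * u η = 0 := orth_u (WithLp.toLp 2 u) lapu0
    intro η
    have := (Finset.sum_eq_zero_iff_of_nonneg
      (fun η' _ => mul_self_nonneg (u η'))).1 h00 η (Finset.mem_univ η)
    exact mul_self_eq_zero.1 this
  have vzero : ∀ η : Config N, v η = 0 := by
    have h00 : ∑ η : Config N, v η * v η = 0 := orth_v (WithLp.toLp 2 v) lapv0
    intro η
    have := (Finset.sum_eq_zero_iff_of_nonneg
      (fun η' _ => mul_self_nonneg (v η'))).1 h00 η (Finset.mem_univ η)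
    exact mul_self_eq_zero.1 this
  -- the final identities at the origin
  have Afin : ∀ η : Config N, j η 0 0
      = (hh (trc (-((1,0) : Torus N)) η) - hh η)
        + (gg η - gg (trc ((0,1) : Torus N) η)) := by
    intro η
    have h0 := uzero η
    simp only [hudef, hA'def] at h0
    linarith
  have Bfin : ∀ η : Config N, j η 0 1
      = (hh (trc (-((0,1) : Torus N)) η) - hh η)
        + (gg (trc ((1,0) : Torus N) η) - gg η) := by
    intro η
    have h0 := vzero η
    simp only [hvdef, hB'def] at h0
    linarith
  -- the general identities
  have key0 : ∀ (η : Config N) (x : Torus N), j η x 0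
      = (hh (trc (-((1,0) : Torus N) + -x) η) - hh (trc (-x) η))
        + (gg (trc (-x) η) - gg (trc (((0,1) : Torus N) + -x) η)) := by
    intro η x
    rw [hx η x 0, Afin (trc (-x) η), S19.trc_trc, S19.trc_trc]
  have key1 : ∀ (η : Config N) (x : Torus N), j η x 1
      = (hh (trc (-((0,1) : Torus N) + -x) η) - hh (trc (-x) η))
        + (gg (trc (((1,0) : Torus N) + -x) η) - gg (trc (-x) η)) := by
    intro η x
    rw [hx η x 1, Bfin (trc (-x) η), S19.trc_trc, S19.trc_trc]
  refine ⟨hh, gg, ?_⟩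
  intro η x d
  fin_cases d
  · -- d = 0
    show j η x 0 = (trf (x + dvec N 0) hh η - trf x hh η)
      + (trf (fplus x 0) gg η - trf (fminus x 0) gg η)
    rw [show trf (x + dvec N 0) hh η = hh (trc (-(x + ((1,0) : Torus N))) η) from rfl,
      show trf x hh η = hh (trc (-x) η) from rfl,
      show trf (fplus x 0) gg η = gg (trc (-x) η) from rfl,
      show trf (fminus x 0) gg η = gg (trc (-(x - ((0,1) : Torus N))) η) from rfl,
      key0 η x,
      show -(x + ((1,0) : Torus N)) = -((1,0) : Torus N) + -x from by abel,
      show -(x - ((0,1) : Torus N)) = ((0,1) : Torus N) + -x from by abel]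
  · -- d = 1
    show j η x 1 = (trf (x + dvec N 1) hh η - trf x hh η)
      + (trf (fplus x 1) gg η - trf (fminus x 1) gg η)
    rw [show trf (x + dvec N 1) hh η = hh (trc (-(x + ((0,1) : Torus N))) η) from rfl,
      show trf x hh η = hh (trc (-x) η) from rfl,
      show trf (fplus x 1) gg η = gg (trc (-(x - ((1,0) : Torus N))) η) from rfl,
      show trf (fminus x 1) gg η = gg (trc (-x) η) from rfl,
      key1 η x,
      show -(x + ((0,1) : Torus N)) = -((0,1) : Torus N) + -x from by abel,
      show -(x - ((1,0) : Torus N)) = ((1,0) : Torus N) + -x from by abel]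
  · -- d = 2
    show j η x 2 = (trf (x + dvec N 2) hh η - trf x hh η)
      + (trf (fplus x 2) gg η - trf (fminus x 2) gg η)
    have hnt : j η (x - ((1,0) : Torus N) + dvec N 0) (rev 0) = -j η (x - ((1,0) : Torus N)) 0 :=
      hanti η (x - ((1,0) : Torus N)) 0
    rw [show (x - ((1,0) : Torus N) + dvec N 0) = x from by
        rw [show dvec N 0 = ((1,0) : Torus N) from rfl]; abel] at hnt
    have hnt2 : j η x 2 = -j η (x - ((1,0) : Torus N)) 0 := hnt
    rw [key0 η (x - ((1,0) : Torus N))] at hnt2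
    rw [show (-((1,0) : Torus N) + -(x - ((1,0) : Torus N))) = -x from by abel] at hnt2
    rw [show (((0,1) : Torus N) + -(x - ((1,0) : Torus N)))
      = -(x - ((1,0) : Torus N) - ((0,1) : Torus N)) from by abel] at hnt2
    rw [show trf (x + dvec N 2) hh η = hh (trc (-(x + ((-1,0) : Torus N))) η) from rfl,
      show trf x hh η = hh (trc (-x) η) from rfl,
      show trf (fplus x 2) gg η = gg (trc (-(x - ((1,0) : Torus N) - ((0,1) : Torus N))) η)
        from rfl,
      show trf (fminus x 2) gg η = gg (trc (-(x - ((1,0) : Torus N))) η) from rfl,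
      show -(x + ((-1,0) : Torus N)) = -(x - ((1,0) : Torus N)) from by
        rw [S19.neg_e1]; abel,
      hnt2]
    ring
  · -- d = 3
    show j η x 3 = (trf (x + dvec N 3) hh η - trf x hh η)
      + (trf (fplus x 3) gg η - trf (fminus x 3) gg η)
    have hnt : j η (x - ((0,1) : Torus N) + dvec N 1) (rev 1) = -j η (x - ((0,1) : Torus N)) 1 :=
      hanti η (x - ((0,1) : Torus N)) 1
    rw [show (x - ((0,1) : Torus N) + dvec N 1) = x from by
        rw [show dvec N 1 = ((0,1) : Torus N) from rfl]; abel] at hnt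
    have hnt2 : j η x 3 = -j η (x - ((0,1) : Torus N)) 1 := hnt
    rw [key1 η (x - ((0,1) : Torus N))] at hnt2
    rw [show (-((0,1) : Torus N) + -(x - ((0,1) : Torus N))) = -x from by abel] at hnt2
    rw [show (((1,0) : Torus N) + -(x - ((0,1) : Torus N)))
      = -(x - ((1,0) : Torus N) - ((0,1) : Torus N)) from by abel] at hnt2
    rw [show trf (x + dvec N 3) hh η = hh (trc (-(x + ((0,-1) : Torus N))) η) from rfl,
      show trf x hh η = hh (trc (-x) η) from rfl,
      show trf (fplus x 3) gg η = gg (trc (-(x - ((0,1) : Torus N))) η) from rfl,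
      show trf (fminus x 3) gg η = gg (trc (-(x - ((1,0) : Torus N) - ((0,1) : Torus N))) η)
        from rfl,
      show -(x + ((0,-1) : Torus N)) = -(x - ((0,1) : Torus N)) from by
        rw [S19.neg_e2]; abel,
      hnt2]
    ring
end
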